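/- arXiv:1606.02845 — 8 statements merged into one kernel-verified Lean document; each statement's English description precedes it below -/
import Mathlib

section
/- Let f : ℝ → ℝ be infinitely differentiable on [0,1] and suppose there exist polynomials p_0, p_1, ..., p_d ∈ ℝ[x], not all zero, such that p_d(x)·f⁽ᵈ⁾(x) + ··· + p_1(x)·f'(x) + p_0(x)·f(x) = 0 for all x ∈ [0,1]. Define M(n) = ∫₀¹ xⁿ f(x) dx for n ∈ ℕ. Then the sequence (M(n))_{n≥0} is holonomic: there exist polynomials q_0, q_1, ..., q_e ∈ ℝ[n], not all zero, and N ∈ ℕ such that q_e(n)·M(n+e) + ··· + q_1(n)·M(n+1) + q_0(n)·M(n) = 0 for all n ≥ N. -/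
set_option linter.unusedSectionVars false
set_option linter.unusedVariables false

open MeasureTheory Set Polynomial Finset intervalIntegral

namespace MellinAux

noncomputable def F (f : ℝ → ℝ) (i : ℕ) : ℝ → ℝ := iteratedDerivWithin i f (Set.Icc 0 1)

noncomputable def Mint (f : ℝ → ℝ) (n : ℕ) : ℝ := ∫ x in (0:ℝ)..1, x ^ n * f x

noncomputable def Apoly (d : ℕ) (c : ℝ) (i j : ℕ) : Polynomial ℝ :=
  C (c * (-1)^i) * ∏ t ∈ Finset.range i, (X + C ((d:ℝ) + (j:ℝ) - (t:ℝ)))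

noncomputable def Rpoly (f : ℝ → ℝ) (d J : ℕ) (p : Fin (d+1) → Polynomial ℝ) : Polynomial ℝ :=
  ∑ i : Fin (d+1), ∑ j ∈ Finset.range J, C ((p i).coeff j) *
    ∑ k ∈ Finset.range (i:ℕ), C ((-1:ℝ)^k * F f ((i:ℕ)-1-k) 1) *
      ∏ t ∈ Finset.range k, (X + C ((d:ℝ) + (j:ℝ) - (t:ℝ)))


lemma prodXC_monic (i : ℕ) (a : ℕ → ℝ) : (∏ t ∈ Finset.range i, (X + C (a t))).Monic :=
  monic_prod_of_monic _ _ fun t _ => monic_X_add_C _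

lemma prodXC_natDegree (i : ℕ) (a : ℕ → ℝ) :
    (∏ t ∈ Finset.range i, (X + C (a t))).natDegree = i := by
  rw [natDegree_prod_of_monic _ _ fun t _ => monic_X_add_C _]
  simp [natDegree_X_add_C]

lemma Apoly_natDegree_le (d : ℕ) (c : ℝ) (i j : ℕ) : (Apoly d c i j).natDegree ≤ i := by
  rw [Apoly]
  refine le_trans (natDegree_mul_le) ?_
  rw [natDegree_C, prodXC_natDegree]
  omega

lemma Apoly_coeff_self (d : ℕ) (c : ℝ) (i j : ℕ) :
    (Apoly d c i j).coeff i = c * (-1)^i := by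
  rw [Apoly, coeff_C_mul]
  have h1 : (∏ t ∈ Finset.range i, (X + C ((d:ℝ) + (j:ℝ) - (t:ℝ)))).coeff i = 1 := by
    have hm := prodXC_monic i (fun t => (d:ℝ) + (j:ℝ) - (t:ℝ))
    have h2 := hm.coeff_natDegree
    rwa [prodXC_natDegree] at h2
  rw [h1, mul_one]

lemma Apoly_zero (d : ℕ) (i j : ℕ) : Apoly d 0 i j = 0 := by
  simp [Apoly]

lemma sum_ite_fin {M : ℕ} (g : Fin M → ℝ) (v : ℕ) (hv : v < M)
    (cnd : Fin M → Prop) [DecidablePred cnd] (hc : ∀ s : Fin M, cnd s ↔ (s:ℕ) = v) :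
    ∑ s : Fin M, (if cnd s then g s else 0) = g ⟨v, hv⟩ := by
  rw [Finset.sum_eq_single (⟨v, hv⟩ : Fin M)]
  · rw [if_pos ((hc _).mpr rfl)]
  · intro b _ hne
    rw [if_neg (fun h => hne (Fin.ext ((hc b).mp h)))]
  · intro h
    exact absurd (Finset.mem_univ _) h

variable {f : ℝ → ℝ} (hf : ContDiffOn ℝ (⊤ : ℕ∞) f (Set.Icc 0 1))
include hf

lemma contF (i : ℕ) : ContinuousOn (F f i) (Set.Icc 0 1) :=
  hf.continuousOn_iteratedDerivWithin (by exact_mod_cast le_top) (uniqueDiffOn_Icc one_pos)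

lemma hasDerivF (i : ℕ) {x : ℝ} (hx : x ∈ Set.Icc (0:ℝ) 1) :
    HasDerivWithinAt (F f i) (F f (i+1) x) (Set.Icc 0 1) x := by
  have h := (hf.differentiableOn_iteratedDerivWithin
    (by exact_mod_cast ENat.coe_lt_top i) (uniqueDiffOn_Icc one_pos)) x hx
  have h2 := h.hasDerivWithinAt
  have : F f (i+1) x = derivWithin (F f i) (Set.Icc 0 1) x :=
    by simp only [F]; exact congrFun iteratedDerivWithin_succ x
  rw [F, this]
  exact h2

lemma integrableF (i m : ℕ) :
    IntervalIntegrable (fun x => x ^ m * F f i x) MeasureTheory.volume 0 1 := by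
  apply ContinuousOn.intervalIntegrable
  rw [uIcc_of_le (zero_le_one' ℝ)]
  exact (continuous_pow m).continuousOn.mul (contF hf i)

lemma ibp (i m : ℕ) :
    ∫ x in (0:ℝ)..1, x ^ (m+1) * F f (i+1) x
      = F f i 1 - ((m:ℝ)+1) * ∫ x in (0:ℝ)..1, x ^ m * F f i x := by
  have key : (∫ x in (0:ℝ)..1, (((m:ℝ)+1) * x ^ m * F f i x + x ^ (m+1) * F f (i+1) x))
      = F f i 1 := by
    have h := intervalIntegral.integral_eq_sub_of_hasDeriv_right_of_le
      (f := fun x => x ^ (m+1) * F f i x)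
      (f' := fun x => ((m:ℝ)+1) * x ^ m * F f i x + x ^ (m+1) * F f (i+1) x)
      zero_le_one
      (((continuous_pow (m+1)).continuousOn).mul (contF hf i))
      (fun x hx => by
        have hmem : x ∈ Set.Icc (0:ℝ) 1 := Ioo_subset_Icc_self hx
        have hF := (hasDerivF hf i hmem).mono_of_mem_nhdsWithin
          (Icc_mem_nhdsGT_of_mem ⟨hx.1.le, hx.2⟩)
        have hp : HasDerivWithinAt (fun y : ℝ => y ^ (m+1))
            (((m:ℝ)+1) * x ^ m) (Set.Ioi x) x := by
          simpa using (hasDerivAt_pow (m+1) x).hasDerivWithinAt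
        exact hp.mul hF)
      (by
        apply ContinuousOn.intervalIntegrable
        rw [uIcc_of_le (zero_le_one' ℝ)]
        exact ((continuous_const.mul (continuous_pow m)).continuousOn.mul (contF hf i)).add
          ((continuous_pow (m+1)).continuousOn.mul (contF hf (i+1))))
    simpa using h
  have h1 : IntervalIntegrable (fun x => ((m:ℝ)+1) * x ^ m * F f i x)
      MeasureTheory.volume 0 1 := by
    simpa [mul_assoc] using (integrableF hf i m).const_mul ((m:ℝ)+1)
  rw [intervalIntegral.integral_add h1 (integrableF hf (i+1) (m+1))] at key
  simp_rw [mul_assoc] at key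
  rw [intervalIntegral.integral_const_mul] at key
  linarith


lemma reduce (i : ℕ) : ∀ m : ℕ,
    ∫ x in (0:ℝ)..1, x ^ (m + i) * F f i x
      = (∑ k ∈ Finset.range i,
          (-1:ℝ)^k * (∏ t ∈ Finset.range k, (((m+i:ℕ):ℝ) - (t:ℝ))) * F f (i-1-k) 1)
        + (-1:ℝ)^i * (∏ t ∈ Finset.range i, (((m+i:ℕ):ℝ) - (t:ℝ)))
          * ∫ x in (0:ℝ)..1, x ^ m * f x := by
  induction i with
  | zero => intro m; simp [F]
  | succ i IH =>
    intro m
    have hstep : ∫ x in (0:ℝ)..1, x ^ (m + (i+1)) * F f (i+1) x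
        = F f i 1 - (((m+i:ℕ):ℝ)+1) * ∫ x in (0:ℝ)..1, x ^ (m+i) * F f i x := by
      have := ibp hf i (m+i)
      push_cast at this ⊢
      exact this
    rw [hstep, IH m]
    have hprod : ∀ k, (∏ t ∈ Finset.range (k+1), (((m+(i+1):ℕ):ℝ) - (t:ℝ)))
        = (((m+i:ℕ):ℝ)+1) * ∏ t ∈ Finset.range k, (((m+i:ℕ):ℝ) - (t:ℝ)) := by
      intro k
      rw [Finset.prod_range_succ']
      rw [mul_comm]
      congr 1
      · push_cast
        ring
      · apply Finset.prod_congr rfl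
        intro t _
        push_cast
        ring
    rw [Finset.sum_range_succ']
    have hsum : ∑ k ∈ Finset.range i,
        ((-1:ℝ)^(k+1) * (∏ t ∈ Finset.range (k+1), (((m+(i+1):ℕ):ℝ) - (t:ℝ)))
          * F f (i+1-1-(k+1)) 1)
        = -((((m+i:ℕ):ℝ)+1) * ∑ k ∈ Finset.range i,
            ((-1:ℝ)^k * (∏ t ∈ Finset.range k, (((m+i:ℕ):ℝ) - (t:ℝ))) * F f (i-1-k) 1)) := by
      rw [Finset.mul_sum, ← Finset.sum_neg_distrib]
      apply Finset.sum_congr rfl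
      intro k _
      have hidx : i+1-1-(k+1) = i-1-k := by omega
      rw [hidx, hprod k]
      ring
    rw [hsum, hprod i]
    simp only [pow_zero, Finset.range_zero, Finset.prod_empty, mul_one, one_mul,
      Nat.add_sub_cancel, Nat.sub_zero]
    ring


lemma master (d J : ℕ) (p : Fin (d+1) → Polynomial ℝ) (hJ : ∀ i, (p i).natDegree < J)
    (hode : ∀ x ∈ Set.Icc (0:ℝ) 1, ∑ i : Fin (d+1), (p i).eval x * F f i x = 0) (n : ℕ) :
    ∑ i : Fin (d+1), ∑ j ∈ Finset.range J,
      (p i).coeff j * ∫ x in (0:ℝ)..1, x ^ (n+d+j) * F f i x = 0 := by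
  have key : ∀ i : Fin (d+1), (∫ x in (0:ℝ)..1, x^(n+d) * ((p i).eval x * F f i x))
      = ∑ j ∈ Finset.range J, (p i).coeff j * ∫ x in (0:ℝ)..1, x ^ (n+d+j) * F f i x := by
    intro i
    have hfun : ∀ x:ℝ, x^(n+d) * ((p i).eval x * F f i x)
        = ∑ j ∈ Finset.range J, (p i).coeff j * (x ^ (n+d+j) * F f i x) := by
      intro x
      rw [eval_eq_sum_range' (hJ i) x, Finset.sum_mul, Finset.mul_sum]
      apply Finset.sum_congr rfl
      intro j _
      rw [pow_add]
      ring
    simp_rw [hfun]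
    rw [intervalIntegral.integral_finset_sum]
    · apply Finset.sum_congr rfl
      intro j _
      rw [intervalIntegral.integral_const_mul]
    · intro j _
      exact (integrableF hf i (n+d+j)).const_mul _
  have h4 : (∫ x in (0:ℝ)..1, ∑ i : Fin (d+1), x^(n+d) * ((p i).eval x * F f i x)) = 0 := by
    rw [intervalIntegral.integral_congr (g := fun _ => (0:ℝ))]
    · simp
    · intro x hx
      rw [Set.uIcc_of_le (zero_le_one' ℝ)] at hx
      show ∑ i : Fin (d+1), x^(n+d) * ((p i).eval x * F f i x) = 0
      rw [← Finset.mul_sum, hode x hx, mul_zero]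
  rw [intervalIntegral.integral_finset_sum] at h4
  · exact (Finset.sum_congr rfl fun i _ => (key i).symm).trans h4
  · intro i _
    apply ContinuousOn.intervalIntegrable
    rw [Set.uIcc_of_le (zero_le_one' ℝ)]
    exact (continuous_pow _).continuousOn.mul
      (((p i).continuous_aeval.continuousOn).mul (contF hf i))


lemma master2 (d J : ℕ) (p : Fin (d+1) → Polynomial ℝ) (hJ : ∀ i, (p i).natDegree < J)
    (hode : ∀ x ∈ Set.Icc (0:ℝ) 1, ∑ i : Fin (d+1), (p i).eval x * F f i x = 0) (n : ℕ) :
    (∑ i : Fin (d+1), ∑ j ∈ Finset.range J,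
        (Apoly d ((p i).coeff j) (i:ℕ) j).eval (n:ℝ) * Mint f (n + d + j - (i:ℕ)))
      + (Rpoly f d J p).eval (n:ℝ) = 0 := by
  have hmain := master hf d J p hJ hode n
  have hper : ∀ (i : Fin (d+1)) (j : ℕ),
      (p i).coeff j * ∫ x in (0:ℝ)..1, x ^ (n+d+j) * F f (i:ℕ) x
      = (Apoly d ((p i).coeff j) (i:ℕ) j).eval (n:ℝ) * Mint f (n+d+j - (i:ℕ))
        + (C ((p i).coeff j) * ∑ k ∈ Finset.range (i:ℕ), C ((-1:ℝ)^k * F f ((i:ℕ)-1-k) 1) *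
            ∏ t ∈ Finset.range k, (X + C ((d:ℝ) + (j:ℝ) - (t:ℝ)))).eval (n:ℝ) := by
    intro i j
    have hm : (n + d + j - (i:ℕ)) + (i:ℕ) = n + d + j := by
      have := i.is_le; omega
    have hred := reduce hf (i:ℕ) (n + d + j - (i:ℕ))
    rw [hm] at hred
    rw [hred]
    have hcast : ∀ k : ℕ, (∏ t ∈ Finset.range k, (((n+d+j:ℕ):ℝ) - (t:ℝ)))
        = ∏ t ∈ Finset.range k, ((n:ℝ) + ((d:ℝ) + (j:ℝ) - (t:ℝ))) := by
      intro k
      apply Finset.prod_congr rfl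
      intro t _
      push_cast
      ring
    have hsum : ∑ k ∈ Finset.range (i:ℕ),
        (-1:ℝ)^k * (∏ t ∈ Finset.range k, (((n+d+j:ℕ):ℝ) - (t:ℝ))) * F f ((i:ℕ)-1-k) 1
        = ∑ k ∈ Finset.range (i:ℕ), ((-1:ℝ)^k * F f ((i:ℕ)-1-k) 1)
            * ∏ t ∈ Finset.range k, ((n:ℝ) + ((d:ℝ) + (j:ℝ) - (t:ℝ))) := by
      apply Finset.sum_congr rfl
      intro k _
      rw [hcast k]
      ring
    rw [hsum, hcast]
    simp only [Apoly, Mint, eval_mul, eval_C, eval_finset_sum, eval_prod, eval_add, eval_X]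
    ring
  have htot : ∑ i : Fin (d+1), ∑ j ∈ Finset.range J,
      ((p i).coeff j * ∫ x in (0:ℝ)..1, x ^ (n+d+j) * F f (i:ℕ) x)
      = (∑ i : Fin (d+1), ∑ j ∈ Finset.range J,
          (Apoly d ((p i).coeff j) (i:ℕ) j).eval (n:ℝ) * Mint f (n + d + j - (i:ℕ)))
        + (Rpoly f d J p).eval (n:ℝ) := by
    rw [Rpoly, eval_finset_sum, ← Finset.sum_add_distrib]
    apply Finset.sum_congr rfl
    intro i _
    rw [eval_finset_sum, ← Finset.sum_add_distrib]
    apply Finset.sum_congr rfl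
    intro j _
    exact hper i j
  exact htot.symm.trans hmain



end MellinAux

open MellinAux in
/-- If `f` is infinitely differentiable on `[0,1]` and satisfies a linear
differential equation with polynomial coefficients (not all zero) on `[0,1]`,
then its Mellin transform `M n = ∫₀¹ xⁿ f(x) dx` is a holonomic sequence. -/
theorem mellin_transform_of_holonomic_is_holonomic
    (f : ℝ → ℝ) (hf : ContDiffOn ℝ (⊤ : ℕ∞) f (Set.Icc 0 1))
    (d : ℕ) (p : Fin (d + 1) → Polynomial ℝ) (hp : ∃ i, p i ≠ 0)
    (hode : ∀ x ∈ Set.Icc (0 : ℝ) 1,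
      ∑ i : Fin (d + 1),
        (p i).eval x * iteratedDerivWithin (i : ℕ) f (Set.Icc 0 1) x = 0) :
    ∃ (e : ℕ) (q : Fin (e + 1) → Polynomial ℝ), (∃ i, q i ≠ 0) ∧
      ∃ N : ℕ, ∀ n : ℕ, N ≤ n →
        ∑ i : Fin (e + 1),
          (q i).eval (n : ℝ) * (∫ x in (0:ℝ)..1, x ^ (n + (i : ℕ)) * f x) = 0 := by
  classical
  obtain ⟨J, hJ0, hJ⟩ : ∃ J, 1 ≤ J ∧ ∀ i, (p i).natDegree < J :=
    ⟨(Finset.univ.sup fun i : Fin (d+1) => (p i).natDegree) + 1, by omega,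
      fun i => Nat.lt_succ_of_le (Finset.le_sup (f := fun i => (p i).natDegree) (Finset.mem_univ i))⟩
  have hodeF : ∀ x ∈ Set.Icc (0:ℝ) 1,
      ∑ i : Fin (d+1), (p i).eval x * MellinAux.F f (i:ℕ) x = 0 := hode
  have hM := MellinAux.master2 hf d J p hJ hodeF
  set Kset : Finset (Fin (d+1) × ℕ) :=
    (Finset.univ ×ˢ Finset.range J).filter (fun ij => (p ij.1).coeff ij.2 ≠ 0) with hKsetdef
  have hKne : Kset.Nonempty := by
    obtain ⟨i0, hi0⟩ := hp
    have hj0 : (p i0).coeff (p i0).natDegree ≠ 0 :=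
      Polynomial.leadingCoeff_ne_zero.mpr hi0
    set j0 := (p i0).natDegree
    exact ⟨(i0, j0), Finset.mem_filter.mpr ⟨Finset.mem_product.mpr
      ⟨Finset.mem_univ _, Finset.mem_range.mpr
        (lt_of_le_of_lt (Polynomial.le_natDegree_of_ne_zero hj0) (hJ i0))⟩, hj0⟩⟩
  set K : ℕ := Kset.sup (fun ij => d + ij.2 - (ij.1 : ℕ)) with hKdef
  have max1 : ∀ (i : Fin (d+1)) (j : ℕ), j < J → (p i).coeff j ≠ 0 → d + j ≤ K + (i:ℕ) := by
    intro i j hj hc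
    have hmem : (i, j) ∈ Kset := Finset.mem_filter.mpr ⟨Finset.mem_product.mpr
      ⟨Finset.mem_univ _, Finset.mem_range.mpr hj⟩, hc⟩
    have h1 : d + j - (i:ℕ) ≤ K :=
      Finset.le_sup (f := fun ij : Fin (d+1) × ℕ => d + ij.2 - (ij.1 : ℕ)) hmem
    have hi := i.is_le
    omega
  obtain ⟨ij0, hij0mem, hij0⟩ := Finset.exists_mem_eq_sup Kset hKne
    (fun ij => d + ij.2 - (ij.1 : ℕ))
  rw [← hKdef] at hij0
  have hij0c : (p ij0.1).coeff ij0.2 ≠ 0 := (Finset.mem_filter.mp hij0mem).2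
  have hij0J : ij0.2 < J :=
    Finset.mem_range.mp (Finset.mem_product.mp (Finset.mem_filter.mp hij0mem).1).2
  have hij0le := ij0.1.is_le
  have hKlt : K + 1 ≤ d + J := by omega
  set Kset2 := Kset.filter (fun ij => d + ij.2 = K + (ij.1:ℕ)) with hKset2def
  have hKne2 : Kset2.Nonempty := ⟨ij0, Finset.mem_filter.mpr ⟨hij0mem, by omega⟩⟩
  obtain ⟨ijm, hijm_mem, hijm⟩ := Finset.exists_mem_eq_sup Kset2 hKne2 (fun ij => (ij.1 : ℕ))
  have hijm_K : (p ijm.1).coeff ijm.2 ≠ 0 :=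
    (Finset.mem_filter.mp (Finset.mem_filter.mp hijm_mem).1).2
  have hijmJ : ijm.2 < J := Finset.mem_range.mp
    (Finset.mem_product.mp (Finset.mem_filter.mp (Finset.mem_filter.mp hijm_mem).1).1).2
  have heqm : d + ijm.2 = K + (ijm.1:ℕ) := (Finset.mem_filter.mp hijm_mem).2
  have max2 : ∀ (i : Fin (d+1)) (j : ℕ), j < J → (p i).coeff j ≠ 0 →
      d + j = K + (i:ℕ) → (i:ℕ) ≤ (ijm.1:ℕ) := by
    intro i j hj hc hcond
    have hmem : (i,j) ∈ Kset2 := Finset.mem_filter.mpr ⟨Finset.mem_filter.mpr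
      ⟨Finset.mem_product.mpr ⟨Finset.mem_univ _, Finset.mem_range.mpr hj⟩, hc⟩, hcond⟩
    have h1 : (i:ℕ) ≤ Kset2.sup (fun ij => (ij.1:ℕ)) :=
      Finset.le_sup (f := fun ij : Fin (d+1) × ℕ => (ij.1:ℕ)) hmem
    rwa [hijm] at h1
  set q1 : Polynomial ℝ := ∑ i : Fin (d+1), ∑ j ∈ Finset.range J,
    (if d + j = K + (i:ℕ) then MellinAux.Apoly d ((p i).coeff j) (i:ℕ) j else 0) with hq1def
  have hq1co : q1.coeff ((ijm.1:ℕ)) = (p ijm.1).coeff ijm.2 * (-1)^((ijm.1:ℕ)) := by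
    rw [hq1def, Polynomial.finset_sum_coeff]
    rw [Finset.sum_eq_single ijm.1]
    · rw [Polynomial.finset_sum_coeff]
      rw [Finset.sum_eq_single ijm.2]
      · rw [if_pos heqm, MellinAux.Apoly_coeff_self]
      · intro j _ hne
        by_cases hcond : d + j = K + ((ijm.1:ℕ))
        · exact absurd (by omega : j = ijm.2) hne
        · rw [if_neg hcond, Polynomial.coeff_zero]
      · intro habs
        exact absurd (Finset.mem_range.mpr hijmJ) habs
    · intro i _ hne
      rw [Polynomial.finset_sum_coeff]
      apply Finset.sum_eq_zero
      intro j hj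
      by_cases hcond : d + j = K + (i:ℕ)
      · rw [if_pos hcond]
        by_cases hc : (p i).coeff j = 0
        · rw [hc, MellinAux.Apoly_zero, Polynomial.coeff_zero]
        · have hle := max2 i j (Finset.mem_range.mp hj) hc hcond
          have hlt : (i:ℕ) < (ijm.1:ℕ) :=
            lt_of_le_of_ne hle (fun hcoe => hne (Fin.ext hcoe))
          exact Polynomial.coeff_eq_zero_of_natDegree_lt
            (lt_of_le_of_lt (MellinAux.Apoly_natDegree_le d _ _ _) hlt)
      · rw [if_neg hcond, Polynomial.coeff_zero]
    · intro habs
      exact absurd (Finset.mem_univ _) habs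
  have hq1 : q1 ≠ 0 := by
    intro h
    rw [h, Polynomial.coeff_zero] at hq1co
    exact (mul_ne_zero hijm_K (pow_ne_zero _ (by norm_num : (-1:ℝ) ≠ 0))) hq1co.symm
  have hq1c : q1.comp (X + C 1) ≠ 0 := by
    intro h
    apply hq1
    have h2 := congrArg (fun r : Polynomial ℝ => r.comp (X - C 1)) h
    simp only [Polynomial.zero_comp] at h2
    rw [Polynomial.comp_assoc] at h2
    have hXc : (X + C (1:ℝ)).comp (X - C 1) = X := by
      rw [Polynomial.add_comp, Polynomial.X_comp, Polynomial.C_comp]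
      ring
    rw [hXc] at h2
    rwa [Polynomial.comp_X] at h2
  by_cases hR : MellinAux.Rpoly f d J p = 0
  · refine ⟨d + J, fun s => ∑ i : Fin (d+1), ∑ j ∈ Finset.range J,
      (if d + j = (s:ℕ) + (i:ℕ) then MellinAux.Apoly d ((p i).coeff j) (i:ℕ) j else 0),
      ⟨⟨K, by omega⟩, ?_⟩, 0, ?_⟩
    · show (∑ i : Fin (d+1), ∑ j ∈ Finset.range J,
        (if d + j = K + (i:ℕ) then MellinAux.Apoly d ((p i).coeff j) (i:ℕ) j else 0)) ≠ 0
      rw [← hq1def]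
      exact hq1
    · intro n _
      show ∑ s : Fin (d+J+1), (∑ i : Fin (d+1), ∑ j ∈ Finset.range J,
          (if d + j = (s:ℕ) + (i:ℕ) then MellinAux.Apoly d ((p i).coeff j) (i:ℕ) j else 0)).eval (n:ℝ)
          * MellinAux.Mint f (n + (s:ℕ)) = 0
      have hswap : ∑ s : Fin (d+J+1), (∑ i : Fin (d+1), ∑ j ∈ Finset.range J,
          (if d + j = (s:ℕ) + (i:ℕ) then MellinAux.Apoly d ((p i).coeff j) (i:ℕ) j else 0)).eval (n:ℝ)
          * MellinAux.Mint f (n + (s:ℕ))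
        = ∑ i : Fin (d+1), ∑ j ∈ Finset.range J,
            (MellinAux.Apoly d ((p i).coeff j) (i:ℕ) j).eval (n:ℝ)
              * MellinAux.Mint f (n + d + j - (i:ℕ)) := by
        simp only [Polynomial.eval_finset_sum, Finset.sum_mul]
        rw [Finset.sum_comm]
        apply Finset.sum_congr rfl
        intro i _
        rw [Finset.sum_comm]
        apply Finset.sum_congr rfl
        intro j hj
        have hiJ := i.is_le
        have hjJ := Finset.mem_range.mp hj
        have hv : d + j - (i:ℕ) < d + J + 1 := by omega
        have hterm : ∀ s : Fin (d+J+1),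
            (if d + j = (s:ℕ) + (i:ℕ) then MellinAux.Apoly d ((p i).coeff j) (i:ℕ) j
              else 0).eval (n:ℝ) * MellinAux.Mint f (n + (s:ℕ))
            = (if d + j = (s:ℕ) + (i:ℕ) then
                (MellinAux.Apoly d ((p i).coeff j) (i:ℕ) j).eval (n:ℝ)
                  * MellinAux.Mint f (n + (s:ℕ)) else 0) := by
          intro s
          split <;> simp
        rw [Finset.sum_congr rfl (fun s _ => hterm s)]
        rw [MellinAux.sum_ite_fin
          (g := fun s : Fin (d+J+1) => (MellinAux.Apoly d ((p i).coeff j) (i:ℕ) j).eval (n:ℝ)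
            * MellinAux.Mint f (n + (s:ℕ)))
          (d + j - (i:ℕ)) hv _ (fun s => by constructor <;> (intro hh; omega))]
        have hidx : n + (d + j - (i:ℕ)) = n + d + j - (i:ℕ) := by omega
        rw [hidx]
      rw [hswap]
      have h0 := hM n
      rw [hR, Polynomial.eval_zero, add_zero] at h0
      exact h0
  · refine ⟨d + J, fun s => ∑ i : Fin (d+1), ∑ j ∈ Finset.range J,
      ((if d + j + 1 = (s:ℕ) + (i:ℕ) then
          (MellinAux.Rpoly f d J p) * ((MellinAux.Apoly d ((p i).coeff j) (i:ℕ) j).comp (X + C 1))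
        else 0)
       - (if d + j = (s:ℕ) + (i:ℕ) then
          ((MellinAux.Rpoly f d J p).comp (X + C 1)) * MellinAux.Apoly d ((p i).coeff j) (i:ℕ) j
        else 0)),
      ⟨⟨K + 1, by omega⟩, ?_⟩, 0, ?_⟩
    · show (∑ i : Fin (d+1), ∑ j ∈ Finset.range J,
        ((if d + j + 1 = (K+1) + (i:ℕ) then
            (MellinAux.Rpoly f d J p) * ((MellinAux.Apoly d ((p i).coeff j) (i:ℕ) j).comp (X + C 1))
          else 0)
         - (if d + j = (K+1) + (i:ℕ) then
            ((MellinAux.Rpoly f d J p).comp (X + C 1)) * MellinAux.Apoly d ((p i).coeff j) (i:ℕ) j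
          else 0))) ≠ 0
      have hval : (∑ i : Fin (d+1), ∑ j ∈ Finset.range J,
          ((if d + j + 1 = (K+1) + (i:ℕ) then
              (MellinAux.Rpoly f d J p) * ((MellinAux.Apoly d ((p i).coeff j) (i:ℕ) j).comp (X + C 1))
            else 0)
           - (if d + j = (K+1) + (i:ℕ) then
              ((MellinAux.Rpoly f d J p).comp (X + C 1)) * MellinAux.Apoly d ((p i).coeff j) (i:ℕ) j
            else 0)))
          = (MellinAux.Rpoly f d J p) * (q1.comp (X + C 1)) := by
        rw [hq1def, Polynomial.sum_comp, Finset.mul_sum]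
        apply Finset.sum_congr rfl
        intro i _
        rw [Polynomial.sum_comp, Finset.mul_sum]
        apply Finset.sum_congr rfl
        intro j hj
        have h2 : (if d + j = (K+1) + (i:ℕ) then
            ((MellinAux.Rpoly f d J p).comp (X + C 1)) * MellinAux.Apoly d ((p i).coeff j) (i:ℕ) j
          else 0) = 0 := by
          split
          · rename_i hcond
            have hc0 : (p i).coeff j = 0 := by
              by_contra hc
              have := max1 i j (Finset.mem_range.mp hj) hc
              omega
            rw [hc0, MellinAux.Apoly_zero, mul_zero]
          · rfl
        rw [h2, sub_zero]
        by_cases hcond : d + j = K + (i:ℕ)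
        · rw [if_pos (by omega : d + j + 1 = (K+1) + (i:ℕ)), if_pos hcond]
        · rw [if_neg (by omega : ¬ (d + j + 1 = (K+1) + (i:ℕ))), if_neg hcond,
            Polynomial.zero_comp, mul_zero]
      rw [hval]
      exact mul_ne_zero hR hq1c
    · intro n _
      show ∑ s : Fin (d+J+1), (∑ i : Fin (d+1), ∑ j ∈ Finset.range J,
          ((if d + j + 1 = (s:ℕ) + (i:ℕ) then
              (MellinAux.Rpoly f d J p) * ((MellinAux.Apoly d ((p i).coeff j) (i:ℕ) j).comp (X + C 1))
            else 0)
           - (if d + j = (s:ℕ) + (i:ℕ) then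
              ((MellinAux.Rpoly f d J p).comp (X + C 1)) * MellinAux.Apoly d ((p i).coeff j) (i:ℕ) j
            else 0))).eval (n:ℝ) * MellinAux.Mint f (n + (s:ℕ)) = 0
      have hswap : ∑ s : Fin (d+J+1), (∑ i : Fin (d+1), ∑ j ∈ Finset.range J,
          ((if d + j + 1 = (s:ℕ) + (i:ℕ) then
              (MellinAux.Rpoly f d J p) * ((MellinAux.Apoly d ((p i).coeff j) (i:ℕ) j).comp (X + C 1))
            else 0)
           - (if d + j = (s:ℕ) + (i:ℕ) then
              ((MellinAux.Rpoly f d J p).comp (X + C 1)) * MellinAux.Apoly d ((p i).coeff j) (i:ℕ) j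
            else 0))).eval (n:ℝ) * MellinAux.Mint f (n + (s:ℕ))
        = ∑ i : Fin (d+1), ∑ j ∈ Finset.range J,
            ((MellinAux.Rpoly f d J p).eval (n:ℝ)
                * ((MellinAux.Apoly d ((p i).coeff j) (i:ℕ) j).eval ((n:ℝ)+1)
                  * MellinAux.Mint f ((n+1) + d + j - (i:ℕ)))
             - (MellinAux.Rpoly f d J p).eval ((n:ℝ)+1)
                * ((MellinAux.Apoly d ((p i).coeff j) (i:ℕ) j).eval (n:ℝ)
                  * MellinAux.Mint f (n + d + j - (i:ℕ)))) := by
        simp only [Polynomial.eval_finset_sum, Finset.sum_mul]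
        rw [Finset.sum_comm]
        apply Finset.sum_congr rfl
        intro i _
        rw [Finset.sum_comm]
        apply Finset.sum_congr rfl
        intro j hj
        have hiJ := i.is_le
        have hjJ := Finset.mem_range.mp hj
        have hterm : ∀ s : Fin (d+J+1),
            (Polynomial.eval (n:ℝ)
              ((if d + j + 1 = (s:ℕ) + (i:ℕ) then
                  (MellinAux.Rpoly f d J p) * ((MellinAux.Apoly d ((p i).coeff j) (i:ℕ) j).comp (X + C 1))
                else 0)
               - (if d + j = (s:ℕ) + (i:ℕ) then
                  ((MellinAux.Rpoly f d J p).comp (X + C 1)) * MellinAux.Apoly d ((p i).coeff j) (i:ℕ) j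
                else 0))) * MellinAux.Mint f (n + (s:ℕ))
            = (if d + j + 1 = (s:ℕ) + (i:ℕ) then
                (MellinAux.Rpoly f d J p).eval (n:ℝ)
                  * ((MellinAux.Apoly d ((p i).coeff j) (i:ℕ) j).eval ((n:ℝ)+1)
                    * MellinAux.Mint f (n + (s:ℕ))) else 0)
              - (if d + j = (s:ℕ) + (i:ℕ) then
                  (MellinAux.Rpoly f d J p).eval ((n:ℝ)+1)
                    * ((MellinAux.Apoly d ((p i).coeff j) (i:ℕ) j).eval (n:ℝ)
                      * MellinAux.Mint f (n + (s:ℕ))) else 0) := by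
          intro s
          rw [Polynomial.eval_sub, sub_mul]
          congr 1
          · split <;> simp [Polynomial.eval_comp, mul_assoc]
          · split <;> simp [Polynomial.eval_comp, mul_assoc]
        rw [Finset.sum_congr rfl (fun s _ => hterm s), Finset.sum_sub_distrib]
        have hv1 : d + j + 1 - (i:ℕ) < d + J + 1 := by omega
        have hv2 : d + j - (i:ℕ) < d + J + 1 := by omega
        rw [MellinAux.sum_ite_fin
          (g := fun s : Fin (d+J+1) => (MellinAux.Rpoly f d J p).eval (n:ℝ)
            * ((MellinAux.Apoly d ((p i).coeff j) (i:ℕ) j).eval ((n:ℝ)+1)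
              * MellinAux.Mint f (n + (s:ℕ))))
          (d + j + 1 - (i:ℕ)) hv1 _ (fun s => by constructor <;> (intro hh; omega))]
        rw [MellinAux.sum_ite_fin
          (g := fun s : Fin (d+J+1) => (MellinAux.Rpoly f d J p).eval ((n:ℝ)+1)
            * ((MellinAux.Apoly d ((p i).coeff j) (i:ℕ) j).eval (n:ℝ)
              * MellinAux.Mint f (n + (s:ℕ))))
          (d + j - (i:ℕ)) hv2 _ (fun s => by constructor <;> (intro hh; omega))]
        have hidx1 : n + (d + j + 1 - (i:ℕ)) = (n+1) + d + j - (i:ℕ) := by omega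
        have hidx2 : n + (d + j - (i:ℕ)) = n + d + j - (i:ℕ) := by omega
        rw [hidx1, hidx2]
      rw [hswap]
      have h0 := hM n
      have h1 := hM (n+1)
      push_cast at h1
      simp only [Finset.sum_sub_distrib, ← Finset.mul_sum]
      rw [eq_neg_of_add_eq_zero_left h0, eq_neg_of_add_eq_zero_left h1]
      ring
end

section
/- For every n ∈ ℕ, the regularized Mellin transform of log(x)/(1−x) satisfies ∫₀¹ (xⁿ − 1) · log(x)/(1−x) dx = Σ_{i=1}^{n} 1/i². -/
/-!
Expanding `(xⁿ - 1)/(1 - x) = -(1 + x + ⋯ + xⁿ⁻¹)` turns the integrand into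
`-∑_{k<n} xᵏ log x`, and `∫₀¹ xᵏ log x dx = -1/(k+1)²` by the antiderivative
`x^(k+1) ((k+1) log x - 1)/(k+1)²`, which is continuous at `0` because `x log x → 0`.
-/

open MeasureTheory Real

theorem Finset.sum_Icc_one_eq_sum_range {M : Type*} [AddCommMonoid M] (f : ℕ → M) (n : ℕ) :
    ∑ i ∈ Icc 1 n, f i = ∑ k ∈ range n, f (k + 1) := by
  rw [range_eq_Ico, sum_Ico_add' f, zero_add, Ico_add_one_right_eq_Icc]

lemma pow_sub_one_mul_log_div_one_sub (n : ℕ) (x : ℝ) :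
    (x ^ n - 1) * (log x / (1 - x)) = -∑ k ∈ Finset.range n, x ^ k * log x := by
  rcases eq_or_ne x 1 with rfl | hx
  · simp
  have h1x : 1 - x ≠ 0 := sub_ne_zero.mpr hx.symm
  rw [← Finset.sum_mul, geom_sum_eq hx]
  field_simp
  ring

lemma intervalIntegrable_pow_mul_log (k : ℕ) (a b : ℝ) :
    IntervalIntegrable (fun x : ℝ => x ^ k * log x) volume a b :=
  intervalIntegral.intervalIntegrable_log'.continuousOn_mul (continuous_pow k).continuousOn

lemma hasDerivAt_pow_succ_mul_log_antideriv (k : ℕ) {x : ℝ} (hx : x ≠ 0) :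
    HasDerivAt (fun x => x ^ (k + 1) * ((k + 1) * log x - 1) / ((k : ℝ) + 1) ^ 2)
      (x ^ k * log x) x := by
  refine (((hasDerivAt_pow (k + 1) x).mul
    (((hasDerivAt_log hx).const_mul _).sub_const 1)).div_const _).congr_deriv ?_
  push_cast
  field_simp
  ring

lemma continuous_pow_succ_mul_log_antideriv (k : ℕ) :
    Continuous fun x : ℝ => x ^ (k + 1) * ((k + 1) * log x - 1) / ((k : ℝ) + 1) ^ 2 := by
  refine ((((continuous_const (y := (k : ℝ) + 1)).mul
    ((continuous_pow k).mul continuous_mul_log)).sub (continuous_pow (k + 1))).div_const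
    (((k : ℝ) + 1) ^ 2)).congr fun x => ?_
  simp only [Pi.mul_apply, Pi.sub_apply]
  ring

lemma integral_pow_mul_log (k : ℕ) :
    ∫ x in (0:ℝ)..1, x ^ k * log x = -1 / ((k : ℝ) + 1) ^ 2 := by
  rw [intervalIntegral.integral_eq_sub_of_hasDerivAt_of_le zero_le_one
    (continuous_pow_succ_mul_log_antideriv k).continuousOn
    (fun x hx => hasDerivAt_pow_succ_mul_log_antideriv k hx.1.ne')
    (intervalIntegrable_pow_mul_log k 0 1)]
  simp

/-- The regularized Mellin transform of `log(x)/(1-x)` gives the harmonic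
numbers of order 2: `∫₀¹ (xⁿ − 1)·log(x)/(1−x) dx = Σ_{i=1}^{n} 1/i²`. -/
theorem regularized_mellin_log_div_one_sub (n : ℕ) :
    ∫ x in (0:ℝ)..1, (x ^ n - 1) * (Real.log x / (1 - x)) =
      ∑ i ∈ Finset.Icc 1 n, 1 / (i : ℝ) ^ 2 := by
  simp_rw [pow_sub_one_mul_log_div_one_sub, intervalIntegral.integral_neg]
  rw [intervalIntegral.integral_finsetSum fun k _ => intervalIntegrable_pow_mul_log k 0 1,
    Finset.sum_Icc_one_eq_sum_range, ← Finset.sum_neg_distrib]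
  refine Finset.sum_congr rfl fun k _ => ?_
  rw [integral_pow_mul_log]
  push_cast
  ring
end

section
/- Let f(x) = ∫₀ˣ √(1−τ)/(1+τ) dτ and define M(n) = ∫₀¹ xⁿ f(x) dx for n ∈ ℕ. Then for all integers n ≥ 2, 6·∫₀¹ √(1−τ)/(1+τ) dτ = −2(n−1)n·M(n−2) + 3n·M(n−1) + (n+1)(2n+3)·M(n). -/
/-!
Write `g τ = √(1 - τ) / (1 + τ)` and `I k = ∫₀¹ xᵏ g x dx`. Since `f' = g` and `f 0 = 0`,
integration by parts gives `(k + 1) M k + I (k + 1) = f 1`. The moments `I k` satisfy the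
three-term recurrence `(2k + 2) I k = 3 I (k + 1) + (2k + 5) I (k + 2)`: the polynomial
`2k + 2 - 3x - (2k + 5)x²` factors as `(1 + x)(2k + 2 - (2k + 5)x)`, so that
`xᵏ (2k + 2 - 3x - (2k + 5)x²) g x` is twice the derivative of `xᵏ⁺¹ (1 - x)^(3/2)`, which vanishes
at `0` and `1`. Eliminating `I (n - 1)`, `I n`, `I (n + 1)` gives the recurrence for `M`.
-/

open MeasureTheory Real intervalIntegral Set

theorem integral_pow_mul_primitive_add_integral_pow_succ_mul {g : ℝ → ℝ} {a b : ℝ}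
    (hg : ContinuousOn g (uIcc a b)) (k : ℕ) :
    ((k : ℝ) + 1) * (∫ x in a..b, x ^ k * ∫ τ in a..x, g τ) + ∫ x in a..b, x ^ (k + 1) * g x =
      b ^ (k + 1) * ∫ τ in a..b, g τ := by
  have hpow (x : ℝ) : HasDerivAt (fun x : ℝ => x ^ (k + 1)) (((k : ℝ) + 1) * x ^ k) x := by
    simpa using hasDerivAt_pow (k + 1) x
  have hprim : ∀ x ∈ Ioo (min a b) (max a b), HasDerivAt (fun x => ∫ τ in a..x, g τ) (g x) x :=
    fun x hx => integral_hasDerivAt_right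
      (hg.mono (uIcc_subset_uIcc_left (Ioo_subset_Icc_self hx))).intervalIntegrable
      ((hg.mono Ioo_subset_Icc_self).stronglyMeasurableAtFilter isOpen_Ioo x hx)
      (hg.continuousAt (Icc_mem_nhds hx.1 hx.2))
  rw [integral_mul_deriv_eq_deriv_mul_of_hasDerivAt (by fun_prop)
      (continuousOn_primitive_interval hg.integrableOn_uIcc) (fun x _ => hpow x) hprim
      ((by fun_prop : Continuous fun x : ℝ => ((k : ℝ) + 1) * x ^ k).intervalIntegrable a b)
      hg.intervalIntegrable,
    integral_same, mul_zero, sub_zero]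
  simp only [mul_assoc, intervalIntegral.integral_const_mul]
  ring

theorem continuousOn_sqrt_one_sub_div_one_add :
    ContinuousOn (fun x : ℝ => √(1 - x) / (1 + x)) (Ioi (-1)) :=
  ContinuousOn.div (by fun_prop) (by fun_prop) fun x hx => by
    rw [mem_Ioi] at hx
    linarith

theorem uIcc_zero_one_subset_Ioi_neg_one : uIcc (0 : ℝ) 1 ⊆ Ioi (-1) := by
  rw [uIcc_of_le zero_le_one]
  exact (Icc_subset_Ioi_iff zero_le_one).2 (by norm_num)

theorem hasDerivAt_pow_succ_mul_one_sub_rpow_three_halves (k : ℕ) {x : ℝ} (hx : x ≤ 1) :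
    HasDerivAt (fun x : ℝ => x ^ (k + 1) * (1 - x) ^ (3 / 2 : ℝ))
      (x ^ k * √(1 - x) * ((k + 1) * (1 - x) - 3 / 2 * x)) x := by
  have hpow : HasDerivAt (fun u : ℝ => u ^ (k + 1)) (((k : ℝ) + 1) * x ^ k) x := by
    simpa using hasDerivAt_pow (k + 1) x
  have hrpow := ((hasDerivAt_id x).const_sub 1).rpow_const (p := 3 / 2) (Or.inr (by norm_num))
  refine (hpow.mul hrpow).congr_deriv ?_
  have h32 : (1 - x) ^ (3 / 2 : ℝ) = (1 - x) * √(1 - x) := by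
    rw [sqrt_eq_rpow, show (3 / 2 : ℝ) = 1 + 1 / 2 by norm_num,
      rpow_add' (by linarith) (by norm_num), rpow_one]
  rw [id, h32, show (3 / 2 : ℝ) - 1 = 1 / 2 by norm_num, ← sqrt_eq_rpow]
  ring

theorem integral_pow_mul_sqrt_one_sub_div_one_add_recurrence (k : ℕ) :
    (2 * (k : ℝ) + 2) * (∫ x in (0 : ℝ)..1, x ^ k * (√(1 - x) / (1 + x))) =
      3 * (∫ x in (0 : ℝ)..1, x ^ (k + 1) * (√(1 - x) / (1 + x))) +
        (2 * (k : ℝ) + 5) * ∫ x in (0 : ℝ)..1, x ^ (k + 2) * (√(1 - x) / (1 + x)) := by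
  have hint (j : ℕ) :
      IntervalIntegrable (fun x : ℝ => x ^ j * (√(1 - x) / (1 + x))) volume 0 1 :=
    ContinuousOn.intervalIntegrable <| (continuous_pow j).continuousOn.mul
      (continuousOn_sqrt_one_sub_div_one_add.mono uIcc_zero_one_subset_Ioi_neg_one)
  have hexact : ∫ x in (0 : ℝ)..1, ((2 * (k : ℝ) + 2) * (x ^ k * (√(1 - x) / (1 + x))) -
      3 * (x ^ (k + 1) * (√(1 - x) / (1 + x))) -
      (2 * (k : ℝ) + 5) * (x ^ (k + 2) * (√(1 - x) / (1 + x)))) = 0 :=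
    calc _ = ∫ x in (0 : ℝ)..1, 2 * (x ^ k * √(1 - x) * ((k + 1) * (1 - x) - 3 / 2 * x)) := by
          refine integral_congr fun x hx => ?_
          have : 1 + x ≠ 0 :=
            (uIcc_zero_one_subset_Ioi_neg_one hx).ne' ∘ eq_neg_of_add_eq_zero_right
          field_simp
          ring
      _ = 2 * ((1 : ℝ) ^ (k + 1) * (1 - 1) ^ (3 / 2 : ℝ) -
            0 ^ (k + 1) * (1 - 0) ^ (3 / 2 : ℝ)) := by
          rw [intervalIntegral.integral_const_mul, integral_eq_sub_of_hasDerivAt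
            (fun x hx => hasDerivAt_pow_succ_mul_one_sub_rpow_three_halves k ?_)
            (Continuous.intervalIntegrable (by fun_prop) _ _)]
          rw [uIcc_of_le zero_le_one] at hx
          exact hx.2
      _ = 0 := by norm_num
  rw [integral_sub ((hint k).const_mul _ |>.sub ((hint (k + 1)).const_mul _))
      ((hint (k + 2)).const_mul _),
    integral_sub ((hint k).const_mul _) ((hint (k + 1)).const_mul _),
    intervalIntegral.integral_const_mul, intervalIntegral.integral_const_mul,
    intervalIntegral.integral_const_mul] at hexact
  linarith

/-- Recurrence for the Mellin transform of `f(x) = ∫₀ˣ √(1−τ)/(1+τ) dτ`: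
`6·f(1) = −2(n−1)n·M(n−2) + 3n·M(n−1) + (n+1)(2n+3)·M(n)` for `n ≥ 2`. -/
theorem mellin_recurrence_int_sqrt (f : ℝ → ℝ) (M : ℕ → ℝ)
    (hf : ∀ x : ℝ, f x = ∫ τ in (0:ℝ)..x, Real.sqrt (1 - τ) / (1 + τ))
    (hM : ∀ n : ℕ, M n = ∫ x in (0:ℝ)..1, x ^ n * f x) :
    ∀ n : ℕ, 2 ≤ n →
      6 * (∫ τ in (0:ℝ)..1, Real.sqrt (1 - τ) / (1 + τ)) =
        -2 * ((n : ℝ) - 1) * n * M (n - 2) + 3 * n * M (n - 1) +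
          ((n : ℝ) + 1) * (2 * n + 3) * M n := by
  intro n hn
  obtain ⟨m, rfl⟩ := Nat.exists_eq_add_of_le' hn
  have hparts (k : ℕ) :
      ((k : ℝ) + 1) * M k + ∫ x in (0 : ℝ)..1, x ^ (k + 1) * (√(1 - x) / (1 + x)) = f 1 := by
    simpa only [one_pow, one_mul, ← hf, ← hM] using
      integral_pow_mul_primitive_add_integral_pow_succ_mul
        (continuousOn_sqrt_one_sub_div_one_add.mono uIcc_zero_one_subset_Ioi_neg_one) k
  have h0 := hparts m
  have h1 := hparts (m + 1)
  have h2 := hparts (m + 2)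
  have hrec := integral_pow_mul_sqrt_one_sub_div_one_add_recurrence (m + 1)
  rw [← hf 1, Nat.add_sub_cancel, show m + 2 - 1 = m + 1 by omega]
  simp only [add_assoc, Nat.reduceAdd] at h1 h2 hrec
  push_cast at h0 h1 h2 hrec ⊢
  linear_combination (2 * (m : ℝ) + 4) * h0 - 3 * h1 - (2 * (m : ℝ) + 7) * h2 - hrec
end

section
/- Let f : ℝ → ℝ be continuously differentiable on [0,1] and set M(n) = ∫₀¹ xⁿ f(x) dx for n ∈ ℕ. If (n+2)·M(n+2) − M(n+1) − (n+1)·M(n) = 0 for all n ∈ ℕ, then ∫₀¹ xⁿ · ( (x − x³)·f'(x) − (x² + x)·f(x) ) dx = 0 for all n ∈ ℕ. -/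
/-!
Multiplying the differential expression by `xⁿ` and integrating, the term
`(x^(n+1) - x^(n+3)) f'(x)` integrates by parts without boundary terms, because
`x^(n+1) - x^(n+3)` vanishes at `0` and `1`. What remains is a combination of moments of `f`,
namely `(n+2)M(n+2) - M(n+1) - (n+1)M(n)`.
-/

open MeasureTheory Set intervalIntegral

noncomputable def unitIntervalMoment (f : ℝ → ℝ) (n : ℕ) : ℝ :=
  ∫ x in (0:ℝ)..1, x ^ n * f x

theorem integral_mul_derivWithin_Icc_eq_neg_of_eq_zero {a b : ℝ} (hab : a < b)
    {u u' f : ℝ → ℝ} (hu : ∀ x, HasDerivAt u (u' x) x) (hu' : Continuous u')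
    (hf : ContDiffOn ℝ 1 f (Icc a b)) (ha : u a = 0) (hb : u b = 0) :
    ∫ x in a..b, u x * derivWithin f (Icc a b) x = -∫ x in a..b, u' x * f x := by
  have hf' : ContinuousOn (derivWithin f (Icc a b)) (Icc a b) :=
    hf.continuousOn_derivWithin (uniqueDiffOn_Icc hab) le_rfl
  have hfd (x : ℝ) (hx : x ∈ uIcc a b) :
      HasDerivWithinAt f (derivWithin f (Icc a b) x) (uIcc a b) x := by
    rw [uIcc_of_le hab.le] at hx ⊢
    exact (hf.differentiableOn one_ne_zero x hx).hasDerivWithinAt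
  simpa [ha, hb] using integral_mul_deriv_eq_deriv_mul_of_hasDerivWithinAt
    (fun x _ ↦ (hu x).hasDerivWithinAt) hfd (hu'.intervalIntegrable a b)
    (hf'.intervalIntegrable_of_Icc hab.le)

theorem integral_pow_mul_ode_eq_moments {f : ℝ → ℝ} (hf : ContDiffOn ℝ 1 f (Icc 0 1))
    (n : ℕ) :
    ∫ x in (0:ℝ)..1, x ^ n * ((x - x ^ 3) * derivWithin f (Icc 0 1) x - (x ^ 2 + x) * f x) =
      (n + 2) * unitIntervalMoment f (n + 2) - unitIntervalMoment f (n + 1) -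
        (n + 1) * unitIntervalMoment f n := by
  have hint (k : ℕ) : IntervalIntegrable (fun x ↦ x ^ k * f x) volume 0 1 :=
    ((continuous_pow k).continuousOn.mul hf.continuousOn).intervalIntegrable_of_Icc zero_le_one
  have hf' : ContinuousOn (derivWithin f (Icc 0 1)) (Icc 0 1) :=
    hf.continuousOn_derivWithin (uniqueDiffOn_Icc zero_lt_one) le_rfl
  have hint' : IntervalIntegrable
      (fun x ↦ (x ^ (n + 1) - x ^ (n + 3)) * derivWithin f (Icc 0 1) x) volume 0 1 :=
    ((by fun_prop : Continuous fun x : ℝ ↦ x ^ (n + 1) - x ^ (n + 3)).continuousOn.mul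
      hf').intervalIntegrable_of_Icc zero_le_one
  have hibp : ∫ x in (0:ℝ)..1, (x ^ (n + 1) - x ^ (n + 3)) * derivWithin f (Icc 0 1) x =
      (n + 3) * unitIntervalMoment f (n + 2) - (n + 1) * unitIntervalMoment f n := by
    rw [integral_mul_derivWithin_Icc_eq_neg_of_eq_zero zero_lt_one
      (u' := fun x ↦ (n + 1) * x ^ n - (n + 3) * x ^ (n + 2)) _ (by fun_prop) hf
      (by simp) (by simp)]
    · simp_rw [sub_mul, mul_assoc]
      rw [integral_sub ((hint n).const_mul _) ((hint (n + 2)).const_mul _),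
        intervalIntegral.integral_const_mul, intervalIntegral.integral_const_mul,
        unitIntervalMoment, unitIntervalMoment]
      ring
    · intro x
      exact ((hasDerivAt_pow (n + 1) x).sub (hasDerivAt_pow (n + 3) x)).congr_deriv
        (by push_cast; ring_nf)
  calc _ = (∫ x in (0:ℝ)..1, (x ^ (n + 1) - x ^ (n + 3)) * derivWithin f (Icc 0 1) x) -
        ((∫ x in (0:ℝ)..1, x ^ (n + 2) * f x) + ∫ x in (0:ℝ)..1, x ^ (n + 1) * f x) := by
        rw [← integral_add (hint _) (hint _), ← integral_sub hint' ((hint _).add (hint _))]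
        congr 1 with x
        ring
    _ = _ := by
      rw [hibp, ← unitIntervalMoment, ← unitIntervalMoment]
      ring

/-- If the Mellin transform `M(n) = ∫₀¹ xⁿ f(x) dx` of a continuously
differentiable function `f` satisfies `(n+2)M(n+2) − M(n+1) − (n+1)M(n) = 0`,
then `f` satisfies the Mellin-transformed differential equation
`∫₀¹ xⁿ·((x − x³)f'(x) − (x² + x)f(x)) dx = 0`. -/
theorem inverse_mellin_ode (f : ℝ → ℝ)
    (hf : ContDiffOn ℝ 1 f (Set.Icc 0 1))
    (hrec : ∀ n : ℕ,
      ((n : ℝ) + 2) * (∫ x in (0:ℝ)..1, x ^ (n + 2) * f x) -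
        (∫ x in (0:ℝ)..1, x ^ (n + 1) * f x) -
        ((n : ℝ) + 1) * (∫ x in (0:ℝ)..1, x ^ n * f x) = 0) :
    ∀ n : ℕ,
      ∫ x in (0:ℝ)..1,
        x ^ n * ((x - x ^ 3) * derivWithin f (Set.Icc 0 1) x -
          (x ^ 2 + x) * f x) = 0 :=
  fun n ↦ (integral_pow_mul_ode_eq_moments hf n).trans (hrec n)
end

section
/- Assume the series S = Σ_{i=1}^{∞} (−1)ⁱ·(Σ_{j=1}^{i} 1/j²)/i converges, and define f_n = (−1)ⁿ·( Σ_{i=1}^{n} (−1)ⁱ·(Σ_{j=1}^{i} 1/j²)/i − S ) for n ∈ ℕ. Then for all n ∈ ℕ, (n+1)(n+2)²·f_n − (n+2)(n² + 7n + 11)·f_{n+1} + (−n³ − 5n² − 6n + 1)·f_{n+2} + (n+3)³·f_{n+3} = 0. -/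
/-! Adding consecutive terms of `f` cancels `S` together with the alternating signs:
`(n + 1) (f (n + 1) + f n) = H (n + 1)`, where `H m = Σ_{j ≤ m} 1/j²`.
Since `(n + 1)² (H (n + 1) - H n) = 1`, the expression
`(n + 2)² ((n + 2)(f (n + 2) + f (n + 1)) - (n + 1)(f (n + 1) + f n))` is constantly `1`,
and the difference of two consecutive instances of this identity is the recurrence. -/

open MeasureTheory Real Filter Finset

theorem neg_one_pow_mul_alternating_sum_sub_succ_add {R : Type*} [CommRing R] (c : ℕ → R) (S : R)
    (n : ℕ) :
    (-1) ^ (n + 1) * (∑ i ∈ Icc 1 (n + 1), (-1) ^ i * c i - S) +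
      (-1) ^ n * (∑ i ∈ Icc 1 n, (-1) ^ i * c i - S) = c (n + 1) := by
  have hsq : ((-1 : R) ^ n) ^ 2 = 1 := by rw [← pow_mul, pow_mul', neg_one_sq, one_pow]
  rw [sum_Icc_succ_top (by omega)]
  linear_combination c (n + 1) * hsq

theorem recurrence_of_mul_succ_add {R : Type*} [CommRing R] (f H : ℕ → R)
    (hf : ∀ n : ℕ, ((n : R) + 1) * (f (n + 1) + f n) = H (n + 1))
    (hH : ∀ n : ℕ, ((n : R) + 1) ^ 2 * (H (n + 1) - H n) = 1) (n : ℕ) :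
    ((n : R) + 1) * ((n : R) + 2) ^ 2 * f n -
        ((n : R) + 2) * ((n : R) ^ 2 + 7 * n + 11) * f (n + 1) +
        (-(n : R) ^ 3 - 5 * (n : R) ^ 2 - 6 * n + 1) * f (n + 2) +
        ((n : R) + 3) ^ 3 * f (n + 3) = 0 := by
  have key : ∀ m : ℕ, ((m : R) + 2) ^ 2 *
      (((m : R) + 2) * (f (m + 2) + f (m + 1)) - ((m : R) + 1) * (f (m + 1) + f m)) = 1 := by
    intro m
    have h₁ := hf (m + 1)
    have h₂ := hH (m + 1)
    push_cast at h₁ h₂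
    linear_combination ((m : R) + 2) ^ 2 * (h₁ - hf m) + h₂
  have key₁ := key (n + 1)
  push_cast at key₁
  linear_combination key₁ - key n

theorem recurrence_alternating_euler_sum_general (S : ℝ)
    (f : ℕ → ℝ)
    (hf : ∀ n : ℕ, f n = (-1 : ℝ) ^ n *
      ((∑ i ∈ Finset.Icc 1 n,
        (-1 : ℝ) ^ i * (∑ j ∈ Finset.Icc 1 i, 1 / (j : ℝ) ^ 2) / i) - S)) :
    ∀ n : ℕ,
      ((n : ℝ) + 1) * ((n : ℝ) + 2) ^ 2 * f n -
        ((n : ℝ) + 2) * ((n : ℝ) ^ 2 + 7 * n + 11) * f (n + 1) +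
        (-(n : ℝ) ^ 3 - 5 * (n : ℝ) ^ 2 - 6 * n + 1) * f (n + 2) +
        ((n : ℝ) + 3) ^ 3 * f (n + 3) = 0 := by
  set H : ℕ → ℝ := fun m => ∑ j ∈ Icc 1 m, 1 / (j : ℝ) ^ 2
  refine recurrence_of_mul_succ_add f H (fun n => ?_) (fun n => ?_)
  · have hsum := neg_one_pow_mul_alternating_sum_sub_succ_add (fun i => H i / i) S n
    simp only [mul_div_assoc] at hf
    rw [hf, hf, hsum]
    push_cast
    field_simp
  · simp only [H]
    rw [sum_Icc_succ_top (by omega)]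
    push_cast
    field_simp
    ring

/-- The sequence `f_n = (−1)ⁿ·(Σ_{i=1}^n (−1)ⁱ H_i⁽²⁾/i − S)`, where `S` is the
alternating Euler sum `Σ_{i=1}^∞ (−1)ⁱ H_i⁽²⁾/i`, satisfies a holonomic
recurrence of order three. -/
theorem recurrence_alternating_euler_sum (S : ℝ)
    (hS : Filter.Tendsto
      (fun N : ℕ => ∑ i ∈ Finset.Icc 1 N,
        (-1 : ℝ) ^ i * (∑ j ∈ Finset.Icc 1 i, 1 / (j : ℝ) ^ 2) / i)
      Filter.atTop (nhds S))
    (f : ℕ → ℝ)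
    (hf : ∀ n : ℕ, f n = (-1 : ℝ) ^ n *
      ((∑ i ∈ Finset.Icc 1 n,
        (-1 : ℝ) ^ i * (∑ j ∈ Finset.Icc 1 i, 1 / (j : ℝ) ^ 2) / i) - S)) :
    ∀ n : ℕ,
      ((n : ℝ) + 1) * ((n : ℝ) + 2) ^ 2 * f n -
        ((n : ℝ) + 2) * ((n : ℝ) ^ 2 + 7 * n + 11) * f (n + 1) +
        (-(n : ℝ) ^ 3 - 5 * (n : ℝ) ^ 2 - 6 * n + 1) * f (n + 2) +
        ((n : ℝ) + 3) ^ 3 * f (n + 3) = 0 :=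
  recurrence_alternating_euler_sum_general S f hf
end

section
/- For any constants c₁, c₂, c₃ ∈ ℝ, the function s(x) = c₁/(x+1) + (c₂/(x+1))·∫₀ˣ 1/(y−1) dy + (c₃/(x+1))·∫₀ˣ log(y)/(y−1) dy satisfies, for all x ∈ (0,1), −(x−1)²(x+1)x³·s'''(x) − (x−1)(2x−1)(3x+1)x²·s''(x) − (x−1)(7x−1)x²·s'(x) − (x−1)x²·s(x) = 0. -/
/-!
Put `u = (x + 1) s = c₁ + c₂ ∫₀ˣ dy/(y - 1) + c₃ ∫₀ˣ log y/(y - 1) dy`.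
Then `(x - 1) u' = c₂ + c₃ log x`, so `x ((x - 1) u')' = c₃` is constant. The operator of the
theorem factors as `-(x - 1) x² · D ∘ x ∘ D ∘ (x - 1) ∘ D ∘ (x + 1)`, hence it annihilates `s`.
-/

open MeasureTheory Real Set

lemma hasDerivAt_integral_div_sub_one {g : ℝ → ℝ} {x : ℝ} (hx : x < 1)
    (hg : IntervalIntegrable g volume 0 x) (hgm : Measurable g) (hgx : ContinuousAt g x) :
    HasDerivAt (fun t => ∫ y in (0:ℝ)..t, g y / (y - 1)) (g x / (x - 1)) x := by
  have hinv : ContinuousOn (fun y : ℝ => (y - 1)⁻¹) (uIcc 0 x) :=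
    (continuousOn_id.sub continuousOn_const).inv₀ fun y hy =>
      sub_ne_zero.2 (hy.2.trans_lt (max_lt zero_lt_one hx)).ne
  refine intervalIntegral.integral_hasDerivAt_right ?_ ?_ ?_
  · simpa only [div_eq_mul_inv] using hg.mul_continuousOn hinv
  · exact (hgm.div (measurable_id.sub measurable_const)).stronglyMeasurable
      |>.stronglyMeasurableAtFilter
  · exact hgx.div (by fun_prop) (sub_ne_zero.2 hx.ne)

lemma contDiffOn_succ_of_hasDerivAt {𝕜 F : Type*} [NontriviallyNormedField 𝕜]
    [NormedAddCommGroup F] [NormedSpace 𝕜 F] {f f' : 𝕜 → F} {U : Set 𝕜} {n : ℕ} (hU : IsOpen U)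
    (hf : ∀ x ∈ U, HasDerivAt f (f' x) x) (hf' : ContDiffOn 𝕜 n f' U) :
    ContDiffOn 𝕜 (n + 1) f U :=
  (contDiffOn_succ_iff_deriv_of_isOpen hU).2
    ⟨fun x hx => (hf x hx).differentiableAt.differentiableWithinAt, by simp,
      hf'.congr fun x hx => (hf x hx).deriv⟩

lemma ContDiffOn.hasDerivAt_deriv {𝕜 F : Type*} [NontriviallyNormedField 𝕜]
    [NormedAddCommGroup F] [NormedSpace 𝕜 F] {f : 𝕜 → F} {U : Set 𝕜} {n : WithTop ℕ∞}
    (hf : ContDiffOn 𝕜 n f U) (hU : IsOpen U) (hn : n ≠ 0) {x : 𝕜} (hx : x ∈ U) :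
    HasDerivAt f (deriv f x) x :=
  ((hf.differentiableOn hn) x hx).differentiableAt (hU.mem_nhds hx) |>.hasDerivAt

lemma deriv_id_mul_deriv_sub_one_mul_deriv_add_one_mul {s : ℝ → ℝ} {U : Set ℝ} (hU : IsOpen U)
    (hs : ContDiffOn ℝ 3 s U) {x : ℝ} (hx : x ∈ U) :
    deriv (fun y => y * deriv (fun z => (z - 1) * deriv (fun w => (w + 1) * s w) z) y) x =
      x * (x ^ 2 - 1) * deriv (deriv (deriv s)) x +
        (2 * x - 1) * (3 * x + 1) * deriv (deriv s) x + (7 * x - 1) * deriv s x + s x := by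
  have d₀ : ∀ y ∈ U, HasDerivAt s (deriv s y) y := fun y => hs.hasDerivAt_deriv hU (by simp)
  have d₁ : ∀ y ∈ U, HasDerivAt (deriv s) (deriv (deriv s) y) y := fun y =>
    (hs.deriv_of_isOpen hU (m := 2) (by norm_num)).hasDerivAt_deriv hU (by simp)
  have d₂ : ∀ y ∈ U, HasDerivAt (deriv (deriv s)) (deriv (deriv (deriv s)) y) y := fun y =>
    ((hs.deriv_of_isOpen hU (m := 2) (by norm_num)).deriv_of_isOpen hU (m := 1)
      (by norm_num)).hasDerivAt_deriv hU (by simp)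
  have hA : EqOn (deriv fun w => (w + 1) * s w) (fun w => (w + 1) * deriv s w + s w) U := by
    intro w hw
    have h : HasDerivAt (fun w => (w + 1) * s w) (1 * s w + (w + 1) * deriv s w) w :=
      ((hasDerivAt_id' w).add_const 1).mul (d₀ w hw)
    rw [h.deriv]; ring
  have hB : EqOn (deriv fun z => (z - 1) * deriv (fun w => (w + 1) * s w) z)
      (fun z => (z * z - 1) * deriv (deriv s) z + (3 * z - 1) * deriv s z + s z) U := by
    intro z hz
    have hB' : EqOn (fun z => (z - 1) * deriv (fun w => (w + 1) * s w) z)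
        (fun z => (z - 1) * ((z + 1) * deriv s z + s z)) U := fun z hz => by
      simp only [hA hz]
    have h : HasDerivAt (fun z => (z - 1) * ((z + 1) * deriv s z + s z))
        (1 * ((z + 1) * deriv s z + s z) +
          (z - 1) * (1 * deriv s z + (z + 1) * deriv (deriv s) z + deriv s z)) z :=
      ((hasDerivAt_id' z).sub_const 1).mul ((((hasDerivAt_id' z).add_const 1).mul
        (d₁ z hz)).add (d₀ z hz))
    rw [hB'.deriv hU hz, h.deriv]; ring
  have hC : EqOn (fun y => y * deriv (fun z => (z - 1) * deriv (fun w => (w + 1) * s w) z) y)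
      (fun y => y * ((y * y - 1) * deriv (deriv s) y + (3 * y - 1) * deriv s y + s y)) U :=
    fun y hy => by simp only [hB hy]
  have h : HasDerivAt
      (fun y => y * ((y * y - 1) * deriv (deriv s) y + (3 * y - 1) * deriv s y + s y))
      (1 * ((x * x - 1) * deriv (deriv s) x + (3 * x - 1) * deriv s x + s x) +
        x * (((1 * x + x * 1) * deriv (deriv s) x + (x * x - 1) * deriv (deriv (deriv s)) x) +
          (3 * 1 * deriv s x + (3 * x - 1) * deriv (deriv s) x) + deriv s x)) x :=
    (hasDerivAt_id' x).mul ((((((hasDerivAt_id' x).mul (hasDerivAt_id' x)).sub_const 1).mul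
      (d₂ x hx)).add ((((hasDerivAt_id' x).const_mul 3).sub_const 1).mul
      (d₁ x hx))).add (d₀ x hx))
  rw [hC.deriv hU hx, h.deriv]; ring

lemma hasDerivAt_const_add_mul_integrals (c₁ c₂ c₃ : ℝ) {x : ℝ} (hx : x ∈ Ioo (0:ℝ) 1) :
    HasDerivAt (fun y => c₁ + c₂ * (∫ t in (0:ℝ)..y, 1 / (t - 1)) +
      c₃ * ∫ t in (0:ℝ)..y, log t / (t - 1)) ((c₂ + c₃ * log x) / (x - 1)) x := by
  have hF := hasDerivAt_integral_div_sub_one (g := fun _ => 1) hx.2 intervalIntegrable_const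
    measurable_const continuousAt_const
  have hG := hasDerivAt_integral_div_sub_one hx.2 intervalIntegral.intervalIntegrable_log'
    measurable_log (continuousAt_log hx.1.ne')
  exact (((hF.const_mul c₂).const_add c₁).add (hG.const_mul c₃)).congr_deriv (by ring)

/-- The general solution `s(x) = c₁/(x+1) + (c₂/(x+1))∫₀ˣ dy/(y−1)
+ (c₃/(x+1))∫₀ˣ log(y)/(y−1) dy` satisfies the third-order holonomic
differential equation on `(0,1)`. -/
theorem ode_general_solution (c₁ c₂ c₃ : ℝ) (s : ℝ → ℝ)
    (hs : ∀ x : ℝ, s x =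
      c₁ / (x + 1) +
      c₂ / (x + 1) * (∫ y in (0:ℝ)..x, 1 / (y - 1)) +
      c₃ / (x + 1) * (∫ y in (0:ℝ)..x, Real.log y / (y - 1))) :
    ∀ x ∈ Set.Ioo (0 : ℝ) 1,
      -((x - 1) ^ 2 * (x + 1) * x ^ 3) * deriv (deriv (deriv s)) x -
        (x - 1) * (2 * x - 1) * (3 * x + 1) * x ^ 2 * deriv (deriv s) x -
        (x - 1) * (7 * x - 1) * x ^ 2 * deriv s x -
        (x - 1) * x ^ 2 * s x = 0 := by
  intro x hx
  set u : ℝ → ℝ := fun y =>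
    c₁ + c₂ * (∫ t in (0:ℝ)..y, 1 / (t - 1)) + c₃ * ∫ t in (0:ℝ)..y, log t / (t - 1)
  set p : ℝ → ℝ := fun y => c₂ + c₃ * log y
  have hsu : s = fun y => u y / (y + 1) := funext fun y => by rw [hs]; ring
  have hu : ∀ y ∈ Ioo (0:ℝ) 1, HasDerivAt u (p y / (y - 1)) y := fun y =>
    hasDerivAt_const_add_mul_integrals c₁ c₂ c₃
  have hp : ∀ y ∈ Ioo (0:ℝ) 1, HasDerivAt p (c₃ / y) y := fun y hy =>
    ((hasDerivAt_log hy.1.ne').const_mul c₃).const_add c₂ |>.congr_deriv (by ring)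
  have hs_smooth : ContDiffOn ℝ 3 s (Ioo 0 1) := by
    rw [hsu]
    refine (contDiffOn_succ_of_hasDerivAt isOpen_Ioo hu ?_).div (by fun_prop)
      fun y hy => by linarith [hy.1]
    exact (contDiffOn_const.add (contDiffOn_const.mul (contDiffOn_log.mono
      fun y hy => hy.1.ne'))).div (by fun_prop) fun y hy => by linarith [hy.2]
  have hu_eq : EqOn (fun w => (w + 1) * s w) u (Ioo 0 1) := fun w hw => by
    rw [hsu]; field_simp [(by linarith [hw.1] : w + 1 ≠ 0)]
  have hp_eq : EqOn (fun z => (z - 1) * deriv (fun w => (w + 1) * s w) z) p (Ioo 0 1) :=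
    fun z hz => by
      beta_reduce
      rw [hu_eq.deriv isOpen_Ioo hz, (hu z hz).deriv]
      field_simp [(by linarith [hz.2] : z - 1 ≠ 0)]
  have hc₃_eq : EqOn (fun y => y * deriv (fun z => (z - 1) * deriv (fun w => (w + 1) * s w) z) y)
      (fun _ => c₃) (Ioo 0 1) := fun y hy => by
    beta_reduce; rw [hp_eq.deriv isOpen_Ioo hy, (hp y hy).deriv]; field_simp [hy.1.ne']
  have hfactor := deriv_id_mul_deriv_sub_one_mul_deriv_add_one_mul isOpen_Ioo hs_smooth hx
  rw [hc₃_eq.deriv isOpen_Ioo hx, deriv_const] at hfactor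
  linear_combination (x - 1) * x ^ 2 * hfactor
end

section
/- Define f_n = Σ_{i=1}^{n} ((−1)ⁱ/i)·Σ_{j=1}^{i} 1/(2ʲ·j) for n ∈ ℕ. Then for all n ∈ ℕ, f_n = −(1/(−2)ⁿ)·∫₀¹ xⁿ·log(2−x)/(2+x) dx + (−1)ⁿ·log(2)·∫₀¹ xⁿ/(1+x) dx + (6·log(2)² − π²)/12 + Li₂(1/4), where Li₂(1/4) = Σ_{k=1}^{∞} (1/4)ᵏ/k². -/
/-!
Write `A n = ∫₀¹ xⁿ log (2 - x) / (2 + x)` and `B n = ∫₀¹ xⁿ / (1 + x)`. Splitting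
`xⁿ⁺¹ = xⁿ (c + x) - c xⁿ` gives `A (n + 1) = -2 A n + ∫₀¹ xⁿ log (2 - x)` and
`B (n + 1) = -B n + 1 / (n + 1)`. Integrating by parts and using
`xᵐ⁺¹ / (2 - x) = 2 xᵐ / (2 - x) - xᵐ` evaluates
`∫₀¹ xⁿ log (2 - x) = 2ⁿ⁺¹ / (n + 1) · (log 2 - ∑_{j ≤ n + 1} 1 / (2ʲ j))`,
so both sides of the identity satisfy the same first-order recursion in `n`.

At `n = 0`, `log (2 - x) log (2 + x) - 2 log 2 log (2 - x) + Li₂ ((2 - x) / 4)` is an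
antiderivative of `log (2 - x) / (2 + x)`, so `A 0 = log² 2 + Li₂ (1/4) - Li₂ (1/2)`, and Euler's
reflection formula `Li₂ x + Li₂ (1 - x) + log x log (1 - x) = π² / 6` gives `Li₂ (1/2)`.
-/

open MeasureTheory Real Filter Set Topology

-- For `|x| > 1` the series diverges and the `tsum` is a junk `0`.
noncomputable def dilog (x : ℝ) : ℝ := ∑' k : ℕ, x ^ (k + 1) / ((k : ℝ) + 1) ^ 2

lemma summable_one_div_succ_sq : Summable fun k : ℕ => 1 / ((k : ℝ) + 1) ^ 2 := by
  exact_mod_cast (summable_nat_add_iff 1).2 (summable_one_div_nat_pow.2 one_lt_two)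

lemma norm_dilog_term_le {x : ℝ} (hx : |x| ≤ 1) (k : ℕ) :
    ‖x ^ (k + 1) / ((k : ℝ) + 1) ^ 2‖ ≤ 1 / ((k : ℝ) + 1) ^ 2 := by
  rw [norm_div, norm_pow, Real.norm_eq_abs, norm_of_nonneg (by positivity)]
  gcongr
  exact pow_le_one₀ (abs_nonneg x) hx

lemma continuousOn_dilog : ContinuousOn dilog (Icc (-1) 1) :=
  continuousOn_tsum (fun k => (continuous_pow (k + 1)).continuousOn.div_const _)
    summable_one_div_succ_sq fun k _ hx => norm_dilog_term_le (abs_le.2 hx) k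

lemma dilog_zero : dilog 0 = 0 := by simp [dilog]

lemma dilog_one : dilog 1 = π ^ 2 / 6 := by
  rw [dilog, ← hasSum_zeta_two.tsum_eq, hasSum_zeta_two.summable.tsum_eq_zero_add]
  simp

lemma hasDerivAt_dilog {x : ℝ} (hx₀ : x ≠ 0) (hx : |x| < 1) :
    HasDerivAt dilog (-log (1 - x) / x) x := by
  set r := (|x| + 1) / 2
  have hr : r < 1 := by simp only [r]; linarith
  have hxr : x ∈ Ioo (-r) r := abs_lt.1 (by simp only [r]; linarith)
  have hsum : ∑' k : ℕ, x ^ k / ((k : ℝ) + 1) = -log (1 - x) / x := by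
    rw [← (hasSum_pow_div_log_of_abs_lt_one hx).tsum_eq, ← tsum_div_const]
    congr 1 with k
    field_simp
    ring
  rw [← hsum]
  refine hasDerivAt_tsum_of_isPreconnected
    (g := fun (k : ℕ) (y : ℝ) => y ^ (k + 1) / ((k : ℝ) + 1) ^ 2)
    (g' := fun (k : ℕ) (y : ℝ) => y ^ k / ((k : ℝ) + 1))
    (summable_geometric_of_lt_one (by positivity) hr) isOpen_Ioo isPreconnected_Ioo
    (fun k y _ => ?_) (fun k y hy => ?_) hxr
    (.of_norm_bounded summable_one_div_succ_sq (norm_dilog_term_le hx.le)) hxr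
  · refine ((hasDerivAt_pow (k + 1) y).div_const (((k : ℝ) + 1) ^ 2)).congr_deriv ?_
    rw [Nat.add_sub_cancel]
    push_cast
    field_simp
  · rw [norm_div, norm_pow, Real.norm_eq_abs, norm_of_nonneg (by positivity)]
    calc |y| ^ k / ((k : ℝ) + 1) ≤ |y| ^ k := div_le_self (by positivity) (by simp)
      _ ≤ r ^ k := by gcongr; exact abs_le.2 ⟨hy.1.le, hy.2.le⟩

lemma tendsto_log_mul_log_one_sub_nhdsGT_zero :
    Tendsto (fun x => log x * log (1 - x)) (𝓝[>] 0) (𝓝 0) := by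
  -- `|log (1 - x)| ≤ x / (1 - x) ≤ 2 x` for `0 < x < 1/2`
  have hbound : ∀ᶠ x in 𝓝[>] (0 : ℝ), ‖log x * log (1 - x)‖ ≤ 2 * ‖x * log x‖ := by
    filter_upwards [Ioo_mem_nhdsGT (by norm_num : (0 : ℝ) < 1 / 2)] with x ⟨hx₀, hx₁⟩
    have hlog := abs_log_sub_add_sum_range_le (x := x) (abs_lt.2 ⟨by linarith, by linarith⟩) 0
    rw [Finset.sum_range_zero, zero_add, zero_add, pow_one, abs_of_pos hx₀] at hlog
    have hx : x / (1 - x) ≤ 2 * x := by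
      rw [div_le_iff₀ (by linarith)]; nlinarith
    rw [norm_mul, norm_mul, Real.norm_eq_abs, Real.norm_eq_abs, Real.norm_eq_abs,
      abs_of_pos hx₀]
    nlinarith [abs_nonneg (log x)]
  refine squeeze_zero_norm' hbound ?_
  simpa using ((continuous_mul_log.tendsto 0).mono_left nhdsWithin_le_nhds).norm.const_mul 2

theorem dilog_add_dilog_one_sub {x : ℝ} (hx : x ∈ Ioo 0 1) :
    dilog x + dilog (1 - x) + log x * log (1 - x) = π ^ 2 / 6 := by
  set F : ℝ → ℝ := fun y => dilog y + dilog (1 - y) + log y * log (1 - y)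
  have hF' : ∀ y ∈ Ioo (0 : ℝ) 1, HasDerivAt F 0 y := by
    rintro y ⟨hy₀, hy₁⟩
    have h1y : |1 - y| < 1 := abs_lt.2 ⟨by linarith, by linarith⟩
    have hd₁ := hasDerivAt_dilog hy₀.ne' (abs_lt.2 ⟨by linarith, hy₁⟩)
    have hd₂ := (hasDerivAt_dilog (by linarith : 1 - y ≠ 0) h1y).comp y
      ((hasDerivAt_id y).const_sub 1)
    have hd₃ := (hasDerivAt_log hy₀.ne').mul
      ((hasDerivAt_log (by linarith : 1 - y ≠ 0)).comp y ((hasDerivAt_id y).const_sub 1))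
    refine ((hd₁.add hd₂).add hd₃).congr_deriv ?_
    simp only [Function.comp_apply, sub_sub_cancel]
    field_simp
    ring
  have hconst : ∀ y ∈ Ioo (0 : ℝ) 1, F y = F x := fun y hy =>
    isOpen_Ioo.is_const_of_deriv_eq_zero isPreconnected_Ioo
      (fun z hz => (hF' z hz).differentiableAt.differentiableWithinAt)
      (fun z hz => (hF' z hz).deriv) hy hx
  have hlim : Tendsto F (𝓝[>] 0) (𝓝 (π ^ 2 / 6)) := by
    have h₁ : Tendsto dilog (𝓝[>] 0) (𝓝 0) := by
      have h := (continuousOn_dilog.continuousAt (x := 0) (Icc_mem_nhds (by norm_num)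
        (by norm_num))).tendsto.mono_left (nhdsWithin_le_nhds (s := Ioi 0))
      rwa [dilog_zero] at h
    have h₂ : Tendsto (fun y => dilog (1 - y)) (𝓝[>] 0) (𝓝 (π ^ 2 / 6)) := by
      rw [← dilog_one]
      refine (continuousOn_dilog 1 (by norm_num)).tendsto.comp
        (tendsto_nhdsWithin_iff.2 ⟨?_, ?_⟩)
      · exact ((continuous_sub_left 1).tendsto' 0 1 (sub_zero 1)).mono_left nhdsWithin_le_nhds
      · filter_upwards [Ioo_mem_nhdsGT (by norm_num : (0 : ℝ) < 1)] with y ⟨hy₀, hy₁⟩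
        exact ⟨by linarith, by linarith⟩
    simpa using (h₁.add h₂).add tendsto_log_mul_log_one_sub_nhdsGT_zero
  refine tendsto_nhds_unique (tendsto_const_nhds.congr' ?_) hlim
  filter_upwards [Ioo_mem_nhdsGT (by norm_num : (0 : ℝ) < 1)] with y hy
  exact (hconst y hy).symm

lemma dilog_one_half : dilog (1 / 2) = π ^ 2 / 12 - log 2 ^ 2 / 2 := by
  have h := dilog_add_dilog_one_sub (x := 1 / 2) ⟨by norm_num, by norm_num⟩
  rw [show (1 : ℝ) - 1 / 2 = 1 / 2 by norm_num, one_div, log_inv] at h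
  linarith

lemma continuousOn_log_two_sub : ContinuousOn (fun x : ℝ => log (2 - x)) (Icc 0 1) :=
  ContinuousOn.log (by fun_prop) fun x hx => by linarith [hx.2]

lemma integral_log_two_sub_div_two_add :
    ∫ x in (0 : ℝ)..1, log (2 - x) / (2 + x) = log 2 ^ 2 + dilog (1 / 4) - dilog (1 / 2) := by
  have hderiv : ∀ x ∈ uIcc (0 : ℝ) 1, HasDerivAt
      (fun y => log (2 - y) * log (2 + y) - 2 * log 2 * log (2 - y) + dilog ((2 - y) / 4))
      (log (2 - x) / (2 + x)) x := by
    intro x hx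
    rw [uIcc_of_le zero_le_one] at hx
    obtain ⟨hx₀, hx₁⟩ := hx
    have hlog_sub := (hasDerivAt_log (by linarith : 2 - x ≠ 0)).comp x
      ((hasDerivAt_id x).const_sub 2)
    have hlog_add := (hasDerivAt_log (by linarith : 2 + x ≠ 0)).comp x
      ((hasDerivAt_id x).const_add 2)
    have hdilog := (hasDerivAt_dilog (x := (2 - x) / 4) (by linarith)
      (abs_lt.2 ⟨by linarith, by linarith⟩)).comp x
      (((hasDerivAt_id x).const_sub 2).div_const 4)
    refine (((hlog_sub.mul hlog_add).sub (hlog_sub.const_mul (2 * log 2))).add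
      hdilog).congr_deriv ?_
    have hlog : log (1 - (2 - x) / 4) = log (2 + x) - 2 * log 2 := by
      rw [show 1 - (2 - x) / 4 = (2 + x) / 2 ^ 2 by ring, log_div (by linarith) (by norm_num),
        log_pow, Nat.cast_ofNat]
    simp only [Function.comp_apply, hlog]
    field_simp
    ring
  have hcont : ContinuousOn (fun x : ℝ => log (2 - x) / (2 + x)) (uIcc 0 1) := by
    rw [uIcc_of_le zero_le_one]
    exact continuousOn_log_two_sub.div (by fun_prop) fun x hx => by linarith [hx.1]
  rw [intervalIntegral.integral_eq_sub_of_hasDerivAt hderiv hcont.intervalIntegrable]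
  norm_num
  ring

lemma integral_pow_succ_mul_div_add {c : ℝ} (hc : 0 < c) {h : ℝ → ℝ}
    (hh : ContinuousOn h (Icc 0 1)) (n : ℕ) :
    ∫ x in (0 : ℝ)..1, x ^ (n + 1) * h x / (c + x) =
      (∫ x in (0 : ℝ)..1, x ^ n * h x) - c * ∫ x in (0 : ℝ)..1, x ^ n * h x / (c + x) := by
  have hpos : ∀ x ∈ Icc (0 : ℝ) 1, c + x ≠ 0 := fun x hx => by linarith [hx.1]
  have hint : ContinuousOn (fun x => x ^ n * h x) (Icc 0 1) := (continuousOn_pow n).mul hh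
  rw [← intervalIntegral.integral_const_mul, ← intervalIntegral.integral_sub
    (by rw [← uIcc_of_le zero_le_one] at hint; exact hint.intervalIntegrable)
    (by rw [← uIcc_of_le zero_le_one] at hint hpos
        exact (continuousOn_const.mul (hint.div (by fun_prop) hpos)).intervalIntegrable)]
  refine intervalIntegral.integral_congr fun x hx => ?_
  rw [uIcc_of_le zero_le_one] at hx
  field_simp [hpos x hx]
  ring

lemma integral_inv_sub {c : ℝ} (hc : 1 < c) :
    ∫ x in (0 : ℝ)..1, (c - x)⁻¹ = log (c / (c - 1)) := by
  rw [intervalIntegral.integral_comp_sub_left (fun x => x⁻¹), sub_zero, integral_inv]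
  rw [uIcc_of_le (by linarith)]
  exact fun h => by linarith [h.1]

lemma integral_pow_div_sub {c : ℝ} (hc : 1 < c) (m : ℕ) :
    ∫ x in (0 : ℝ)..1, x ^ m / (c - x) =
      c ^ m * (log (c / (c - 1)) - ∑ j ∈ Finset.Icc 1 m, 1 / (c ^ j * j)) := by
  have hne : ∀ x ∈ uIcc (0 : ℝ) 1, c - x ≠ 0 := fun x hx => by
    rw [uIcc_of_le zero_le_one] at hx; linarith [hx.2]
  induction m with
  | zero => simpa using integral_inv_sub hc
  | succ m ih =>
    have hrec : ∫ x in (0 : ℝ)..1, x ^ (m + 1) / (c - x) =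
        c * (∫ x in (0 : ℝ)..1, x ^ m / (c - x)) - ∫ x in (0 : ℝ)..1, x ^ m := by
      have hint : IntervalIntegrable (fun x => c * (x ^ m / (c - x))) volume 0 1 :=
        (continuousOn_const.mul ((continuousOn_pow m).div (by fun_prop) hne)).intervalIntegrable
      rw [← intervalIntegral.integral_const_mul, ← intervalIntegral.integral_sub hint
        (intervalIntegral.intervalIntegrable_pow m)]
      refine intervalIntegral.integral_congr fun x hx => ?_
      field_simp [hne x hx]
      ring
    rw [hrec, ih, integral_pow, Finset.sum_Icc_succ_top (by omega)]
    have : c ^ m ≠ 0 := by positivity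
    push_cast
    field_simp
    ring

lemma integral_pow_mul_log_sub {c : ℝ} (hc : 1 < c) (n : ℕ) :
    ∫ x in (0 : ℝ)..1, x ^ n * log (c - x) =
      (log (c - 1) + ∫ x in (0 : ℝ)..1, x ^ (n + 1) / (c - x)) / (n + 1) := by
  have hne : ∀ x ∈ uIcc (0 : ℝ) 1, c - x ≠ 0 := fun x hx => by
    rw [uIcc_of_le zero_le_one] at hx; linarith [hx.2]
  have hlog : ∀ x ∈ uIcc (0 : ℝ) 1, HasDerivAt (fun y => log (c - y)) (-1 / (c - x)) x :=
    fun x hx => by simpa using ((hasDerivAt_id x).const_sub c).log (hne x hx)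
  have hpow : ∀ x ∈ uIcc (0 : ℝ) 1,
      HasDerivAt (fun y : ℝ => y ^ (n + 1) / ((n : ℝ) + 1)) (x ^ n) x :=
    fun x _ => ((hasDerivAt_pow (n + 1) x).div_const ((n : ℝ) + 1)).congr_deriv (by
      push_cast [Nat.add_sub_cancel]; field_simp)
  have hibp := intervalIntegral.integral_mul_deriv_eq_deriv_mul hlog hpow
    (ContinuousOn.intervalIntegrable (continuousOn_const.div (by fun_prop) hne))
    (intervalIntegral.intervalIntegrable_pow n)
  have hrest : ∫ x in (0 : ℝ)..1, -1 / (c - x) * (x ^ (n + 1) / (n + 1)) =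
      -(∫ x in (0 : ℝ)..1, x ^ (n + 1) / (c - x)) / (n + 1) := by
    rw [← intervalIntegral.integral_neg, ← intervalIntegral.integral_div]
    refine intervalIntegral.integral_congr fun x _ => ?_
    ring
  simp only [mul_comm (_ ^ n)] at hibp ⊢
  rw [hibp, hrest]
  simp
  ring

lemma one_div_neg_pow {K : Type*} [DivisionRing K] (a : K) (n : ℕ) :
    1 / (-a) ^ n = (-1) ^ n / a ^ n := by
  rw [neg_pow, one_div, mul_inv_rev, ← inv_pow (-1 : K), inv_neg_one, div_eq_mul_inv,
    ((Commute.neg_one_left a).pow_pow n n).inv_right₀.eq]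

/-- Inverse Mellin transform representation of
`f_n = Σ_{i=1}^n ((−1)ⁱ/i)·Σ_{j=1}^i 1/(2ʲ·j)`. -/
theorem inverse_mellin_double_sum (n : ℕ) :
    (∑ i ∈ Finset.Icc 1 n,
        ((-1 : ℝ) ^ i / i) * ∑ j ∈ Finset.Icc 1 i, 1 / (2 ^ j * (j : ℝ))) =
      -(1 / (-2 : ℝ) ^ n) *
          (∫ x in (0:ℝ)..1, x ^ n * Real.log (2 - x) / (2 + x)) +
        (-1 : ℝ) ^ n * Real.log 2 * (∫ x in (0:ℝ)..1, x ^ n / (1 + x)) +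
        (6 * Real.log 2 ^ 2 - π ^ 2) / 12 +
        ∑' k : ℕ, (1 / 4 : ℝ) ^ (k + 1) / ((k : ℝ) + 1) ^ 2 := by
  rw [one_div_neg_pow]
  show _ = _ + dilog (1 / 4)
  induction n with
  | zero =>
    have hB : ∫ x in (0 : ℝ)..1, 1 / (1 + x) = log 2 := by
      rw [intervalIntegral.integral_comp_add_left (fun x => 1 / x), integral_one_div (by norm_num)]
      norm_num
    simp only [Finset.Icc_eq_empty_of_lt zero_lt_one, Finset.sum_empty, pow_zero, one_mul, hB,
      integral_log_two_sub_div_two_add, dilog_one_half]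
    ring
  | succ n ih =>
    have hA := integral_pow_succ_mul_div_add two_pos continuousOn_log_two_sub n
    have hB := integral_pow_succ_mul_div_add one_pos (h := fun _ => 1) continuousOn_const n
    simp only [mul_one] at hA hB
    rw [integral_pow_mul_log_sub one_lt_two, integral_pow_div_sub one_lt_two] at hA
    rw [Finset.sum_Icc_succ_top (by omega), ih, hA, hB, integral_pow]
    norm_num
    field_simp
    ring
end

section
/- Each of the functions g₁(x) = 1/(2+x) and g₂(x) = −log(1 − x/2)/(2+x) satisfies, for all x ∈ (0,1), (3x² − 2x)·g(x) + (4x − 16x² + 13x³)·g'(x) + (8x − 10x² − 9x³ + 8x⁴)·g''(x) + (4x² − 4x³ − x⁴ + x⁵)·g'''(x) = 0. -/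
/-!
Write `g₂ = ℓ · g₁` with `ℓ x = -log (1 - x / 2)`. Then `ℓ' = (2 - x)⁻¹`, so
`ℓ⁽ᵏ⁺¹⁾ = k! (2 - x)^(-1-k)`, while `g₁⁽ᵏ⁾ = (-1)ᵏ k! (2 + x)^(-1-k)`. By Leibniz's rule every
derivative of `g₂` is `ℓ` times the same derivative of `g₁` plus a rational function of `x`, so
both identities become rational identities, checked after clearing the denominators `2 ± x`.
-/

open Real
open scoped Nat

section InvLinear

variable {𝕜 : Type*} [NontriviallyNormedField 𝕜]

theorem iteratedDeriv_inv_const_add (c x : 𝕜) (k : ℕ) :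
    iteratedDeriv k (fun y => (c + y)⁻¹) x = (-1) ^ k * k ! * (c + x) ^ (-1 - k : ℤ) := by
  simpa [iteratedDeriv_eq_iterate, add_comm] using congrFun (iter_deriv_inv_linear k (1 : 𝕜) c) x

theorem iteratedDeriv_inv_const_sub (c x : 𝕜) (k : ℕ) :
    iteratedDeriv k (fun y => (c - y)⁻¹) x = k ! * (c - x) ^ (-1 - k : ℤ) := by
  have := congrFun (iter_deriv_inv_linear k (-1 : 𝕜) c) x
  simp only [neg_one_mul, neg_add_eq_sub] at this
  rw [iteratedDeriv_eq_iterate, this, mul_right_comm _ _ ((-1) ^ k), ← mul_pow]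
  simp

end InvLinear

theorem one_sub_div_ne_zero {K : Type*} [Field K] {c x : K} (hc : c ≠ 0) (hx : x ≠ c) :
    1 - x / c ≠ 0 := by
  rw [one_sub_div hc]
  exact div_ne_zero (sub_ne_zero.2 hx.symm) hc

section NegLogOneSubDiv

variable {c x : ℝ}

theorem hasDerivAt_neg_log_one_sub_div (hc : c ≠ 0) (hx : x ≠ c) :
    HasDerivAt (fun y => -log (1 - y / c)) (c - x)⁻¹ x := by
  refine ((((hasDerivAt_id' x).div_const c).const_sub 1).log
    (one_sub_div_ne_zero hc hx)).fun_neg.congr_deriv ?_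
  have : c - x ≠ 0 := sub_ne_zero.2 hx.symm
  field_simp

theorem iteratedDeriv_succ_neg_log_one_sub_div (hc : c ≠ 0) (hx : x ≠ c) (k : ℕ) :
    iteratedDeriv (k + 1) (fun y => -log (1 - y / c)) x = k ! * (c - x) ^ (-1 - k : ℤ) := by
  have hderiv : deriv (fun y => -log (1 - y / c)) =ᶠ[nhds x] fun y => (c - y)⁻¹ := by
    filter_upwards [isOpen_ne.mem_nhds hx] with y hy using
      (hasDerivAt_neg_log_one_sub_div hc hy).deriv
  rw [iteratedDeriv_succ', hderiv.iteratedDeriv_eq, iteratedDeriv_inv_const_sub]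

theorem contDiffAt_neg_log_one_sub_div (hc : c ≠ 0) (hx : x ≠ c) (n : WithTop ℕ∞) :
    ContDiffAt ℝ n (fun y => -log (1 - y / c)) x := by
  have := one_sub_div_ne_zero hc hx
  fun_prop (disch := assumption)

end NegLogOneSubDiv

noncomputable def odeOperator (g : ℝ → ℝ) (x : ℝ) : ℝ :=
  (3 * x ^ 2 - 2 * x) * g x +
    (4 * x - 16 * x ^ 2 + 13 * x ^ 3) * deriv g x +
    (8 * x - 10 * x ^ 2 - 9 * x ^ 3 + 8 * x ^ 4) * deriv (deriv g) x +
    (4 * x ^ 2 - 4 * x ^ 3 - x ^ 4 + x ^ 5) * deriv (deriv (deriv g)) x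

theorem odeOperator_eq_iteratedDeriv (g : ℝ → ℝ) (x : ℝ) :
    odeOperator g x =
      (3 * x ^ 2 - 2 * x) * iteratedDeriv 0 g x +
        (4 * x - 16 * x ^ 2 + 13 * x ^ 3) * iteratedDeriv 1 g x +
        (8 * x - 10 * x ^ 2 - 9 * x ^ 3 + 8 * x ^ 4) * iteratedDeriv 2 g x +
        (4 * x ^ 2 - 4 * x ^ 3 - x ^ 4 + x ^ 5) * iteratedDeriv 3 g x := by
  simp only [odeOperator, iteratedDeriv_eq_iterate]
  rfl

theorem odeOperator_inv_two_add {x : ℝ} (hx : 2 + x ≠ 0) :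
    odeOperator (fun y => (2 + y)⁻¹) x = 0 := by
  rw [odeOperator_eq_iteratedDeriv]
  simp only [iteratedDeriv_inv_const_add]
  norm_num
  field_simp
  ring

theorem odeOperator_neg_log_mul_inv_two_add {x : ℝ} (h₁ : 2 + x ≠ 0) (h₂ : x ≠ 2) :
    odeOperator (fun y => -log (1 - y / 2) * (2 + y)⁻¹) x = 0 := by
  have hℓ := contDiffAt_neg_log_one_sub_div two_ne_zero h₂
  have hu (n : WithTop ℕ∞) : ContDiffAt ℝ n (fun y => (2 + y)⁻¹) x := by
    fun_prop (disch := exact h₁)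
  rw [odeOperator_eq_iteratedDeriv]
  simp only [iteratedDeriv_fun_mul (hℓ _) (hu _), Finset.sum_range_succ, Finset.sum_range_zero,
    iteratedDeriv_zero, iteratedDeriv_succ_neg_log_one_sub_div two_ne_zero h₂,
    iteratedDeriv_inv_const_add]
  have h₃ : 2 - x ≠ 0 := sub_ne_zero.2 h₂.symm
  norm_num
  field_simp
  ring

/-- Both `g₁(x) = 1/(2+x)` and `g₂(x) = −log(1 − x/2)/(2+x)` satisfy the same
third-order holonomic differential equation on `(0,1)`. -/
theorem ode_two_solutions (g₁ g₂ : ℝ → ℝ)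
    (hg₁ : ∀ x : ℝ, g₁ x = 1 / (2 + x))
    (hg₂ : ∀ x : ℝ, g₂ x = -Real.log (1 - x / 2) / (2 + x)) :
    ∀ x ∈ Set.Ioo (0 : ℝ) 1,
      ((3 * x ^ 2 - 2 * x) * g₁ x +
          (4 * x - 16 * x ^ 2 + 13 * x ^ 3) * deriv g₁ x +
          (8 * x - 10 * x ^ 2 - 9 * x ^ 3 + 8 * x ^ 4) * deriv (deriv g₁) x +
          (4 * x ^ 2 - 4 * x ^ 3 - x ^ 4 + x ^ 5) * deriv (deriv (deriv g₁)) x = 0) ∧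
      ((3 * x ^ 2 - 2 * x) * g₂ x +
          (4 * x - 16 * x ^ 2 + 13 * x ^ 3) * deriv g₂ x +
          (8 * x - 10 * x ^ 2 - 9 * x ^ 3 + 8 * x ^ 4) * deriv (deriv g₂) x +
          (4 * x ^ 2 - 4 * x ^ 3 - x ^ 4 + x ^ 5) * deriv (deriv (deriv g₂)) x = 0) := by
  obtain rfl : g₁ = fun y => (2 + y)⁻¹ := funext fun y => (hg₁ y).trans (one_div _)
  obtain rfl : g₂ = fun y => -log (1 - y / 2) * (2 + y)⁻¹ :=
    funext fun y => (hg₂ y).trans (div_eq_mul_inv _ _)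
  rintro x ⟨hx₀, hx₁⟩
  exact ⟨odeOperator_inv_two_add (by linarith),
    odeOperator_neg_log_mul_inv_two_add (by linarith) (by linarith)⟩
end
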